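/- arXiv:1803.04018 — 3 statements merged into one kernel-verified Lean document; each statement's English description precedes it below -/
import Mathlib

section
/- Let (V,φ) be a topological flow. Then ent*(V,φ) = ∞ if, and only if, there exists an infinite countable coindependent family of non-stationary cocyclic φ-cotrajectories in V. -/
set_option maxHeartbeats 1000000
set_option synthInstance.maxHeartbeats 400000
set_option linter.unusedSectionVars false
set_option linter.unusedVariables false


open scoped ENNReal

section Aux

variable {𝕂 V : Type*} [Field 𝕂] [AddCommGroup V] [Module 𝕂 V]

/-- evaluation of a polynomial in `φ` precomposed with a functional. -/
noncomputable def XActL (φ : V →ₗ[𝕂] V) (v : V →ₗ[𝕂] 𝕂) : Polynomial 𝕂 →ₗ[𝕂] (V →ₗ[𝕂] 𝕂) :=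
  ((LinearMap.llcomp 𝕂 V V 𝕂) v) ∘ₗ (Polynomial.aeval φ).toLinearMap

lemma XActL_apply (φ : V →ₗ[𝕂] V) (v : V →ₗ[𝕂] 𝕂) (p : Polynomial 𝕂) :
    XActL φ v p = v ∘ₗ (Polynomial.aeval φ p) := rfl

lemma XActL_monomial (φ : V →ₗ[𝕂] V) (v : V →ₗ[𝕂] 𝕂) (a : 𝕂) (m : ℕ) :
    XActL φ v (Polynomial.C a * Polynomial.X ^ m) = a • (v ∘ₗ (φ ^ m)) := by
  rw [XActL_apply, map_mul, Polynomial.aeval_C, Polynomial.aeval_X_pow, ← Algebra.smul_def]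
  ext x; simp

lemma XActL_mul (φ : V →ₗ[𝕂] V) (v : V →ₗ[𝕂] 𝕂) (p q : Polynomial 𝕂) :
    XActL φ v (q * p) = XActL φ (XActL φ v q) p := by
  rw [XActL_apply, XActL_apply, XActL_apply, map_mul]
  ext x; simp [Module.End.mul_apply]

/-- `𝕂[X]`-independence of a family of functionals, w.r.t. `φ`. -/
def PIndepF (φ : V →ₗ[𝕂] V) {ι : Type*} [Fintype ι] (v : ι → (V →ₗ[𝕂] 𝕂)) : Prop :=
  ∀ r : ι → Polynomial 𝕂, (∑ i, XActL φ (v i) (r i)) = 0 → ∀ i, r i = 0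

lemma pindepF_iff_chunkLI (φ : V →ₗ[𝕂] V) {ι : Type*} [Fintype ι] (v : ι → (V →ₗ[𝕂] 𝕂)) :
    PIndepF φ v ↔ LinearIndependent 𝕂 (fun q : ι × ℕ => (v q.1) ∘ₗ (φ ^ q.2)) := by
  classical
  constructor
  · intro hP
    rw [linearIndependent_iff']
    intro s c hsum q hq
    set r : ι → Polynomial 𝕂 := fun i =>
      ∑ p ∈ s.filter (fun p => p.1 = i), Polynomial.C (c p) * Polynomial.X ^ p.2 with hr
    have hXr : ∀ i, XActL φ (v i) (r i)
        = ∑ p ∈ s.filter (fun p => p.1 = i), c p • ((v p.1) ∘ₗ (φ ^ p.2)) := by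
      intro i
      rw [hr, map_sum]
      refine Finset.sum_congr rfl ?_
      intro p hp
      rw [Finset.mem_filter] at hp
      rw [XActL_monomial, hp.2]
    have hsum2 : (∑ i, XActL φ (v i) (r i)) = 0 := by
      rw [Finset.sum_congr rfl (fun i _ => hXr i)]
      rw [Finset.sum_fiberwise s (fun p => p.1) (fun p => c p • ((v p.1) ∘ₗ (φ ^ p.2)))]
      exact hsum
    have hri := hP r hsum2 q.1
    have : (r q.1).coeff q.2 = c q := by
      rw [hr]
      rw [Polynomial.finset_sum_coeff]
      rw [Finset.sum_eq_single_of_mem q (by simp [hq])]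
      · simp
      · intro p hp hne
        rw [Finset.mem_filter] at hp
        have : p.2 ≠ q.2 := by
          intro h2
          exact hne (Prod.ext hp.2 h2)
        simp only [Polynomial.coeff_C_mul, Polynomial.coeff_X_pow]
        rw [if_neg fun h2 => this h2.symm]
        ring
    rw [hri] at this
    simpa using this.symm
  · intro hLI r hsum i
    set D := (Finset.univ.sup fun i => (r i).natDegree) + 1 with hD
    have hdeg : ∀ i, (r i).natDegree < D := by
      intro i
      have := Finset.le_sup (f := fun i => (r i).natDegree) (Finset.mem_univ i)
      exact Nat.lt_succ_of_le (by simpa using this)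
    have hexp : ∀ i, XActL φ (v i) (r i)
        = ∑ m ∈ Finset.range D, (r i).coeff m • ((v i) ∘ₗ (φ ^ m)) := by
      intro i
      rw [XActL_apply, Polynomial.aeval_eq_sum_range' (hdeg i)]
      ext x
      simp [LinearMap.sum_apply, LinearMap.smul_apply]
    rw [linearIndependent_iff'] at hLI
    have hsum2 : ∑ q ∈ Finset.univ ×ˢ Finset.range D,
        (r q.1).coeff q.2 • ((v q.1) ∘ₗ (φ ^ q.2)) = 0 := by
      rw [Finset.sum_product]
      rw [← Finset.sum_congr rfl (fun i _ => hexp i)] at *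
      exact hsum
    have := hLI (Finset.univ ×ˢ Finset.range D) (fun q => (r q.1).coeff q.2) hsum2
    ext m
    rcases lt_or_ge m D with hm | hm
    · simpa using this (i, m) (by simp [hm])
    · simp [Polynomial.coeff_eq_zero_of_natDegree_lt (lt_of_lt_of_le (hdeg i) hm)]

/-- Independent functionals are jointly surjective. -/
lemma surj_of_li {ι : Type*} [Fintype ι] (h : ι → (V →ₗ[𝕂] 𝕂))
    (hli : LinearIndependent 𝕂 h) : Function.Surjective (LinearMap.pi h) := by
  classical
  rw [← LinearMap.range_eq_top]
  by_contra hne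
  obtain ⟨ξ, hξ0, hker⟩ := (LinearMap.range (LinearMap.pi h)).exists_le_ker_of_lt_top
    (lt_top_iff_ne_top.mpr hne)
  have hrel : ∑ i, ξ (Pi.single (M := fun _ : ι => 𝕂) i 1) • h i = 0 := by
    ext x
    have hx : (LinearMap.pi h) x ∈ LinearMap.ker ξ := hker ⟨x, rfl⟩
    have : ξ ((LinearMap.pi h) x) = 0 := hx
    have hdec : (LinearMap.pi h) x = ∑ i, (h i x) • Pi.single (M := fun _ : ι => 𝕂) i 1 := by
      ext j
      simp [LinearMap.pi_apply, Pi.single_apply, Finset.sum_ite_eq', mul_comm]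
    rw [hdec] at this
    simp only [map_sum, map_smul] at this
    simpa [LinearMap.sum_apply, LinearMap.smul_apply, smul_eq_mul, mul_comm] using this
  have := linearIndependent_iff'.mp hli Finset.univ (fun i => ξ (Pi.single (M := fun _ : ι => 𝕂) i 1)) hrel
  apply hξ0
  refine LinearMap.ext fun x => ?_
  have hx : x = ∑ i, x i • Pi.single (M := fun _ : ι => 𝕂) i 1 := by
    ext j
    simp [Pi.single_apply, Finset.sum_ite_eq', mul_comm]
  rw [hx, map_sum]
  refine Finset.sum_eq_zero fun i hi => ?_
  rw [map_smul]
  have h0 : ξ (Pi.single (M := fun _ : ι => 𝕂) i 1) = 0 := this i (Finset.mem_univ i)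
  simp [h0]

end Aux

open Submodule Module


section Aux2

variable {𝕂 V : Type*} [Field 𝕂] [AddCommGroup V] [Module 𝕂 V]

lemma fd_quot_iInf_ker {ι : Type*} [Fintype ι] (h : ι → (V →ₗ[𝕂] 𝕂)) :
    FiniteDimensional 𝕂 (V ⧸ (⨅ i, LinearMap.ker (h i))) := by
  have hk : (⨅ i, LinearMap.ker (h i)) = LinearMap.ker (LinearMap.pi h) := (LinearMap.ker_pi h).symm
  rw [hk]
  have e := (LinearMap.pi h).quotKerEquivRange
  haveI : FiniteDimensional 𝕂 (LinearMap.range (LinearMap.pi h)) := inferInstance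
  exact LinearEquiv.finiteDimensional e.symm

lemma finrank_quot_iInf_ker_le {ι : Type*} [Fintype ι] (h : ι → (V →ₗ[𝕂] 𝕂)) :
    finrank 𝕂 (V ⧸ (⨅ i, LinearMap.ker (h i))) ≤ Fintype.card ι := by
  have hk : (⨅ i, LinearMap.ker (h i)) = LinearMap.ker (LinearMap.pi h) := (LinearMap.ker_pi h).symm
  rw [hk]
  have e := (LinearMap.pi h).quotKerEquivRange
  rw [e.finrank_eq]
  calc finrank 𝕂 (LinearMap.range (LinearMap.pi h)) ≤ finrank 𝕂 (ι → 𝕂) := Submodule.finrank_le _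
  _ = Fintype.card ι := by simp

lemma finrank_quot_iInf_ker_eq {ι : Type*} [Fintype ι] (h : ι → (V →ₗ[𝕂] 𝕂))
    (hli : LinearIndependent 𝕂 h) :
    finrank 𝕂 (V ⧸ (⨅ i, LinearMap.ker (h i))) = Fintype.card ι := by
  have hk : (⨅ i, LinearMap.ker (h i)) = LinearMap.ker (LinearMap.pi h) := (LinearMap.ker_pi h).symm
  rw [hk]
  have e := LinearMap.quotKerEquivOfSurjective _ (surj_of_li h hli)
  rw [e.finrank_eq, Module.finrank_pi 𝕂]

/-- vanishing on an infimum of kernels of a spanning family -/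
lemma vanish_of_mem_span {S : Set (V →ₗ[𝕂] 𝕂)} {w : V →ₗ[𝕂] 𝕂}
    (hw : w ∈ Submodule.span 𝕂 S) {x : V} (hx : ∀ f ∈ S, f x = 0) : w x = 0 := by
  induction hw using Submodule.span_induction with
  | mem w hw => exact hx w hw
  | zero => simp
  | add a b _ _ ha hb => simp [ha, hb]
  | smul a w _ hw => simp [hw]

lemma iInf_ker_le_of_span_le {ι κ : Type*} (f : ι → (V →ₗ[𝕂] 𝕂)) (g : κ → (V →ₗ[𝕂] 𝕂))
    (hle : Submodule.span 𝕂 (Set.range f) ≤ Submodule.span 𝕂 (Set.range g)) :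
    (⨅ j, LinearMap.ker (g j)) ≤ (⨅ i, LinearMap.ker (f i)) := by
  intro x hx
  rw [Submodule.mem_iInf]
  intro i
  have hf : f i ∈ Submodule.span 𝕂 (Set.range g) := hle (Submodule.subset_span ⟨i, rfl⟩)
  exact vanish_of_mem_span hf (fun w hw => by
    obtain ⟨j, rfl⟩ := hw; exact (Submodule.mem_iInf _).mp hx j)

lemma iInf_ker_eq_iInf_ker_of_span_eq {ι κ : Type*} (h₁ : ι → (V →ₗ[𝕂] 𝕂)) (h₂ : κ → (V →ₗ[𝕂] 𝕂))
    (hsp : Submodule.span 𝕂 (Set.range h₁) = Submodule.span 𝕂 (Set.range h₂)) :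
    (⨅ i, LinearMap.ker (h₁ i)) = (⨅ j, LinearMap.ker (h₂ j)) :=
  le_antisymm (iInf_ker_le_of_span_le h₂ h₁ hsp.ge) (iInf_ker_le_of_span_le h₁ h₂ hsp.le)

/-- (★) finrank of image under quotient map -/
lemma finrank_map_mkQ_add (A C : Submodule 𝕂 V) [FiniteDimensional 𝕂 C] :
    finrank 𝕂 (Submodule.map A.mkQ C) + finrank 𝕂 ↥(A ⊓ C) = finrank 𝕂 C := by
  set m := A.mkQ ∘ₗ C.subtype with hm
  have hrange : LinearMap.range m = Submodule.map A.mkQ C := by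
    rw [hm, LinearMap.range_comp, Submodule.range_subtype]
  have hker : LinearMap.ker m = Submodule.comap C.subtype (A ⊓ C) := by
    rw [hm, LinearMap.ker_comp, Submodule.ker_mkQ]
    ext ⟨x, hx⟩
    simp [hx]
  have hrn := LinearMap.finrank_range_add_finrank_ker m
  rw [hrange, hker] at hrn
  rw [← hrn]
  congr 1
  exact ((Submodule.comapSubtypeEquivOfLe (inf_le_right : A ⊓ C ≤ C)).finrank_eq).symm

/-- quotient dimension relation: for `C ≤ U`, with `V⧸C` finite-dimensional. -/
lemma finrank_quot_rel (C U : Submodule 𝕂 V) (hle : C ≤ U) [FiniteDimensional 𝕂 (V ⧸ C)] :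
    FiniteDimensional 𝕂 (↥U ⧸ Submodule.comap U.subtype C) ∧
    finrank 𝕂 (↥U ⧸ Submodule.comap U.subtype C) + finrank 𝕂 (V ⧸ U) = finrank 𝕂 (V ⧸ C) := by
  classical
  set ℓ := C.mkQ ∘ₗ U.subtype with hℓ
  have hkerℓ : LinearMap.ker ℓ = Submodule.comap U.subtype C := by
    rw [hℓ, LinearMap.ker_comp, Submodule.ker_mkQ]
  have e1 : (↥U ⧸ Submodule.comap U.subtype C) ≃ₗ[𝕂] LinearMap.range ℓ := by
    rw [← hkerℓ]; exact ℓ.quotKerEquivRange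
  have hrangeℓ : LinearMap.range ℓ = Submodule.map C.mkQ U := by
    rw [hℓ, LinearMap.range_comp, Submodule.range_subtype]
  set q := Submodule.mapQ C U LinearMap.id (by simpa using hle) with hq
  have hqsurj : Function.Surjective q := by
    intro y
    obtain ⟨v, rfl⟩ := U.mkQ_surjective y
    exact ⟨C.mkQ v, by simp [hq, Submodule.mapQ_apply]⟩
  have hkerq : LinearMap.ker q = Submodule.map C.mkQ U := by
    ext y
    obtain ⟨v, rfl⟩ := C.mkQ_surjective y
    constructor
    · intro hy
      have : U.mkQ v = 0 := by
        simpa [hq, Submodule.mapQ_apply] using hy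
      rw [Submodule.mkQ_apply, Submodule.Quotient.mk_eq_zero] at this
      exact ⟨v, this, rfl⟩
    · rintro ⟨u, hu, huv⟩
      have h2 : q (C.mkQ v) = U.mkQ v := by simp [hq, Submodule.mapQ_apply]
      have h3 : q (C.mkQ u) = U.mkQ u := by simp [hq, Submodule.mapQ_apply]
      have h4 : C.mkQ u = C.mkQ v := huv
      have h5 : U.mkQ u = U.mkQ v := by rw [← h3, h4, h2]
      rw [LinearMap.mem_ker, h2, ← h5, Submodule.mkQ_apply, Submodule.Quotient.mk_eq_zero]
      exact hu
  have hFD : FiniteDimensional 𝕂 (↥U ⧸ Submodule.comap U.subtype C) := by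
    haveI : FiniteDimensional 𝕂 (LinearMap.range ℓ) := inferInstance
    exact LinearEquiv.finiteDimensional e1.symm
  refine ⟨hFD, ?_⟩
  have hrn := LinearMap.finrank_range_add_finrank_ker q
  have hrtop : LinearMap.range q = ⊤ := LinearMap.range_eq_top.mpr hqsurj
  rw [hrtop, hkerq] at hrn
  have h1 : finrank 𝕂 (↥U ⧸ Submodule.comap U.subtype C) = finrank 𝕂 (Submodule.map C.mkQ U) := by
    rw [e1.finrank_eq, hrangeℓ]
  rw [h1]
  have h2 : finrank 𝕂 ↥(⊤ : Submodule 𝕂 (V ⧸ U)) = finrank 𝕂 (V ⧸ U) := finrank_top 𝕂 _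
  omega

end Aux2

section Aux3

variable {𝕂 V : Type*} [Field 𝕂] [AddCommGroup V] [Module 𝕂 V]
  [TopologicalSpace V] [IsTopologicalAddGroup V]

lemma submodule_isOpen_mono {p q : Submodule 𝕂 V} (hle : p ≤ q) (hp : IsOpen (p : Set V)) :
    IsOpen (q : Set V) :=
  AddSubgroup.isOpen_mono (H₁ := p.toAddSubgroup) (H₂ := q.toAddSubgroup) hle hp

lemma continuous_pow_lm {φ : V →ₗ[𝕂] V} (hφ : Continuous φ) (k : ℕ) :
    Continuous ⇑(φ ^ k) := by
  induction k with
  | zero => simpa [Module.End.one_eq_id] using continuous_id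
  | succ n ih =>
    have : ⇑(φ ^ (n+1)) = ⇑(φ ^ n) ∘ ⇑φ := by
      funext x
      simp [pow_succ, Module.End.mul_apply]
    rw [this]
    exact ih.comp hφ

lemma isOpen_ker_comp_pow {φ : V →ₗ[𝕂] V} (hφ : Continuous φ) {g : V →ₗ[𝕂] 𝕂}
    (hg : IsOpen ((LinearMap.ker g : Submodule 𝕂 V) : Set V)) (k : ℕ) :
    IsOpen ((LinearMap.ker (g ∘ₗ (φ ^ k)) : Submodule 𝕂 V) : Set V) := by
  have hker : (LinearMap.ker (g ∘ₗ (φ ^ k)) : Set V) = (⇑(φ ^ k)) ⁻¹' (LinearMap.ker g : Set V) := by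
    ext x; simp [LinearMap.mem_ker]
  rw [hker]
  exact (hg.preimage (continuous_pow_lm hφ k))

lemma isOpen_iInf_fin {ι : Type*} [Finite ι] (p : ι → Submodule 𝕂 V)
    (hp : ∀ i, IsOpen ((p i : Set V))) : IsOpen ((⨅ i, p i : Submodule 𝕂 V) : Set V) := by
  rw [Submodule.coe_iInf]
  exact isOpen_iInter_of_finite hp

/-- every element of the span of a finite family of open-kernel functionals has open kernel -/
lemma isOpen_ker_of_mem_span {ι : Type*} [Finite ι] (f : ι → (V →ₗ[𝕂] 𝕂))
    (hop : ∀ i, IsOpen ((LinearMap.ker (f i) : Submodule 𝕂 V) : Set V))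
    {w : V →ₗ[𝕂] 𝕂} (hw : w ∈ Submodule.span 𝕂 (Set.range f)) :
    IsOpen ((LinearMap.ker w : Submodule 𝕂 V) : Set V) := by
  have hle : (⨅ i, LinearMap.ker (f i)) ≤ LinearMap.ker w := by
    intro x hx
    rw [LinearMap.mem_ker]
    exact vanish_of_mem_span hw (fun v hv => by
      obtain ⟨i, rfl⟩ := hv
      exact (Submodule.mem_iInf _).mp hx i)
  exact submodule_isOpen_mono hle (isOpen_iInf_fin _ hop)

/-- a nonzero functional has codimension-one kernel -/
lemma finrank_quot_ker_eq_one {g : V →ₗ[𝕂] 𝕂} (hg : g ≠ 0) :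
    Module.finrank 𝕂 (V ⧸ LinearMap.ker g) = 1 := by
  obtain ⟨x, hx⟩ : ∃ x, g x ≠ 0 := by
    by_contra h
    push_neg at h
    exact hg (LinearMap.ext fun x => by simp [h x])
  have hsurj : Function.Surjective g := by
    intro c
    exact ⟨(c * (g x)⁻¹) • x, by rw [map_smul, smul_eq_mul, inv_mul_cancel_right₀ hx]⟩
  have e := LinearMap.quotKerEquivOfSurjective _ hsurj
  rw [e.finrank_eq, Module.finrank_self]

/-- from a codimension-one open submodule, produce a functional with that kernel -/
lemma exists_functional_of_cocyclic {U : Submodule 𝕂 V} (h1 : Module.finrank 𝕂 (V ⧸ U) = 1) :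
    ∃ g : V →ₗ[𝕂] 𝕂, LinearMap.ker g = U := by
  have hr : Module.rank 𝕂 (V ⧸ U) = 1 := by
    have := h1
    rw [Module.finrank] at this
    exact Cardinal.toNat_eq_one.mp this
  haveI : FiniteDimensional 𝕂 (V ⧸ U) := FiniteDimensional.of_rank_eq_one hr
  obtain ⟨b⟩ : Nonempty (Basis (Fin 1) 𝕂 (V ⧸ U)) := ⟨Module.finBasisOfFinrankEq 𝕂 _ h1⟩
  refine ⟨(b.coord 0) ∘ₗ U.mkQ, ?_⟩
  ext x
  simp only [LinearMap.mem_ker, LinearMap.comp_apply]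
  constructor
  · intro hx
    have hrepr : b.repr (U.mkQ x) = 0 := by
      refine Finsupp.ext fun i => ?_
      have h0 : i = 0 := Subsingleton.elim i 0
      rw [h0]
      simpa [Basis.coord_apply] using hx
    have : U.mkQ x = 0 := by
      have := congrArg b.repr.symm hrepr
      simpa using this
    rwa [Submodule.mkQ_apply, Submodule.Quotient.mk_eq_zero] at this
  · intro hx
    have : U.mkQ x = 0 := by
      rwa [Submodule.mkQ_apply, Submodule.Quotient.mk_eq_zero]
    rw [this]
    simp

end Aux3


/-- A topological `𝕂`-vector space `V` is *linearly compact* if it is Hausdorff, has a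
neighbourhood basis at `0` consisting of open `𝕂`-subspaces, and every family of closed
affine subspaces (cosets of closed `𝕂`-subspaces) with the finite intersection property
has nonempty intersection. -/
def IsLinearlyCompact (𝕂 V : Type*) [Field 𝕂] [AddCommGroup V] [Module 𝕂 V]
    [TopologicalSpace V] : Prop :=
  T2Space V ∧
  (∀ S ∈ nhds (0 : V), ∃ U : Submodule 𝕂 V, IsOpen (U : Set V) ∧ (U : Set V) ⊆ S) ∧
  ∀ (ι : Type) (N : ι → Submodule 𝕂 V) (v : ι → V),
    (∀ i, IsClosed ((N i : Set V))) →
    (∀ F : Finset ι, (⋂ i ∈ F, ((v i + ·) '' (N i : Set V))).Nonempty) →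
    (⋂ i, ((v i + ·) '' (N i : Set V))).Nonempty

/-- A family of proper `𝕂`-subspaces `N i` of `V` is *coindependent* if for every finite
set `F` of indices and every `i ∈ F`, `N i + ⋂_{j ∈ F, j ≠ i} N j = V`. -/
def Coindependent (𝕂 : Type*) {V ι : Type*} [Field 𝕂] [AddCommGroup V] [Module 𝕂 V]
    (N : ι → Submodule 𝕂 V) : Prop :=
  ∀ (F : Finset ι) (i : ι), i ∈ F → N i ⊔ (⨅ j ∈ F, ⨅ _ : j ≠ i, N j) = ⊤

/-- `Cn φ U n = U ∩ φ⁻¹U ∩ ⋯ ∩ φ⁻⁽ⁿ⁻¹⁾U`. -/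
noncomputable def Cn {𝕂 V : Type*} [Field 𝕂] [AddCommGroup V] [Module 𝕂 V]
    (φ : V →ₗ[𝕂] V) (U : Submodule 𝕂 V) (n : ℕ) : Submodule 𝕂 V :=
  ⨅ k ∈ Finset.range n, Submodule.comap (φ ^ k) U

/-- The `φ`-cotrajectory `C(φ,U) = ⋂_{n ∈ ℕ} φ⁻ⁿU = ⋂_{n ≥ 1} C_n(φ,U)`. -/
noncomputable def Cotraj {𝕂 V : Type*} [Field 𝕂] [AddCommGroup V] [Module 𝕂 V]
    (φ : V →ₗ[𝕂] V) (U : Submodule 𝕂 V) : Submodule 𝕂 V :=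
  ⨅ k : ℕ, Submodule.comap (φ ^ k) U

/-- `H*(φ,U) = lim_{n→∞} (1/n)·dim_𝕂 (U / C_n(φ,U))`, realized as a limsup in `ℝ≥0∞`
(the limit exists, so it coincides with the limsup). -/
noncomputable def HStar {𝕂 V : Type*} [Field 𝕂] [AddCommGroup V] [Module 𝕂 V]
    (φ : V →ₗ[𝕂] V) (U : Submodule 𝕂 V) : ℝ≥0∞ :=
  Filter.atTop.limsup fun n : ℕ =>
    (((Module.rank 𝕂 (↥U ⧸ Submodule.comap U.subtype (Cn φ U n))).toENat : ℕ∞) : ℝ≥0∞) /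
      (n : ℝ≥0∞)

/-- The topological entropy `ent*(V,φ) = sup_U H*(φ,U)`, the supremum ranging over all
open `𝕂`-subspaces `U` of `V`. -/
noncomputable def entStar (𝕂 V : Type*) [Field 𝕂] [AddCommGroup V] [Module 𝕂 V]
    [TopologicalSpace V] (φ : V →ₗ[𝕂] V) : ℝ≥0∞ :=
  ⨆ (U : Submodule 𝕂 V) (_ : IsOpen (U : Set V)), HStar φ U

section Aux4

variable {𝕂 V : Type*} [Field 𝕂] [AddCommGroup V] [Module 𝕂 V]

lemma cotraj_ker_eq_iInf (φ : V →ₗ[𝕂] V) (g : V →ₗ[𝕂] 𝕂) :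
    Cotraj φ (LinearMap.ker g) = ⨅ k : ℕ, LinearMap.ker (g ∘ₗ φ ^ k) := by
  ext x
  simp [Cotraj, Submodule.mem_iInf, Submodule.mem_comap, LinearMap.mem_ker]

variable [TopologicalSpace V] [IsTopologicalAddGroup V]

/-- non-stationarity implies linear independence of the orbit of the functional -/
lemma orbit_li_of_not_isOpen {φ : V →ₗ[𝕂] V} (hφ : Continuous φ) {g : V →ₗ[𝕂] 𝕂}
    (hg : IsOpen ((LinearMap.ker g : Submodule 𝕂 V) : Set V))
    (hno : ¬ IsOpen ((Cotraj φ (LinearMap.ker g) : Submodule 𝕂 V) : Set V)) :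
    LinearIndependent 𝕂 (fun m : ℕ => g ∘ₗ φ ^ m) := by
  classical
  by_contra hdep
  rw [linearIndependent_iff'] at hdep
  push_neg at hdep
  obtain ⟨s, c, hsum, i₀, hi₀s, hc₀⟩ := hdep
  set t := s.filter (fun m => c m ≠ 0) with ht
  have htne : t.Nonempty := ⟨i₀, by simp [ht, hi₀s, hc₀]⟩
  set m₀ := t.max' htne with hm₀def
  have hm₀t : m₀ ∈ t := t.max'_mem htne
  have hcm₀ : c m₀ ≠ 0 := (Finset.mem_filter.mp hm₀t).2
  set Sm : Submodule 𝕂 (V →ₗ[𝕂] 𝕂) :=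
    Submodule.span 𝕂 (Set.range fun p : Fin m₀ => g ∘ₗ φ ^ (p : ℕ)) with hSm
  -- the top orbit element lies in the span of the earlier ones
  have hsum_t : ∑ m ∈ t, c m • (g ∘ₗ φ ^ m) = 0 := by
    rw [← hsum]
    exact Finset.sum_subset (Finset.filter_subset _ _)
      (fun x hx hnx => by
        have : c x = 0 := by
          by_contra hne
          exact hnx (Finset.mem_filter.mpr ⟨hx, hne⟩)
        simp [this])
  have h1 : ∑ m ∈ t.erase m₀, c m • (g ∘ₗ φ ^ m) + c m₀ • (g ∘ₗ φ ^ m₀) = 0 := by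
    rw [Finset.sum_erase_add t _ hm₀t]
    exact hsum_t
  have h2 : g ∘ₗ φ ^ m₀ = (c m₀)⁻¹ • (- ∑ m ∈ t.erase m₀, c m • (g ∘ₗ φ ^ m)) := by
    have h3 : c m₀ • (g ∘ₗ φ ^ m₀) = - ∑ m ∈ t.erase m₀, c m • (g ∘ₗ φ ^ m) :=
      eq_neg_of_add_eq_zero_right h1
    rw [← h3, inv_smul_smul₀ hcm₀]
  have hm₀mem : (g ∘ₗ φ ^ m₀) ∈ Sm := by
    rw [h2]
    refine Submodule.smul_mem _ _ (Submodule.neg_mem _ (Submodule.sum_mem _ ?_))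
    intro m hm
    have hmt : m ∈ t := Finset.mem_of_mem_erase hm
    have hmne : m ≠ m₀ := Finset.ne_of_mem_erase hm
    have hmlt : m < m₀ := lt_of_le_of_ne (t.le_max' m hmt) hmne
    exact Submodule.smul_mem _ _ (Submodule.subset_span ⟨⟨m, hmlt⟩, rfl⟩)
  -- Sm is stable under precomposition with φ
  set precL : (V →ₗ[𝕂] 𝕂) →ₗ[𝕂] (V →ₗ[𝕂] 𝕂) := (LinearMap.llcomp 𝕂 V V 𝕂).flip φ with hprecL
  have hprec_apply : ∀ w : V →ₗ[𝕂] 𝕂, precL w = w ∘ₗ φ := fun w => rfl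
  have hstable : ∀ w ∈ Sm, precL w ∈ Sm := by
    intro w hw
    have : precL w ∈ Submodule.map precL Sm := Submodule.mem_map_of_mem hw
    rw [hSm, Submodule.map_span] at this
    refine Submodule.span_le.mpr ?_ this
    rintro y ⟨y', ⟨p, rfl⟩, rfl⟩
    have hco : precL (g ∘ₗ φ ^ (p : ℕ)) = g ∘ₗ φ ^ ((p : ℕ) + 1) := by
      rw [hprec_apply, pow_succ, LinearMap.comp_assoc]
      rfl
    rw [hco]
    rcases lt_or_eq_of_le (Nat.succ_le_of_lt p.2) with hlt | heq
    · exact Submodule.subset_span ⟨⟨(p : ℕ) + 1, hlt⟩, rfl⟩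
    · have heq' : (p : ℕ) + 1 = m₀ := heq
      rw [heq']
      exact hm₀mem
  have horb : ∀ j : ℕ, (g ∘ₗ φ ^ (m₀ + j)) ∈ Sm := by
    intro j
    induction j with
    | zero => simpa using hm₀mem
    | succ n ih =>
      have : g ∘ₗ φ ^ (m₀ + n + 1) = precL (g ∘ₗ φ ^ (m₀ + n)) := by
        rw [hprec_apply, pow_succ, LinearMap.comp_assoc]
        rfl
      rw [show m₀ + (n+1) = m₀ + n + 1 by omega, this]
      exact hstable _ ih
  -- hence the cotrajectory is a finite intersection of open kernels
  have hcot : Cotraj φ (LinearMap.ker g) = ⨅ k : Fin m₀, LinearMap.ker (g ∘ₗ φ ^ (k : ℕ)) := by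
    rw [cotraj_ker_eq_iInf]
    apply le_antisymm
    · exact le_iInf fun k => iInf_le _ (k : ℕ)
    · intro x hx
      rw [Submodule.mem_iInf]
      intro k
      rcases lt_or_ge k m₀ with hk | hk
      · exact (Submodule.mem_iInf _).mp hx ⟨k, hk⟩
      · obtain ⟨j, rfl⟩ := Nat.exists_eq_add_of_le hk
        rw [LinearMap.mem_ker]
        refine vanish_of_mem_span (horb j) ?_
        rintro f ⟨p, rfl⟩
        exact (Submodule.mem_iInf _).mp hx p
  apply hno
  rw [hcot]
  exact isOpen_iInf_fin _ (fun k => isOpen_ker_comp_pow hφ hg (k : ℕ))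

/-- Fact A: in a linearly compact space, open subspaces have finite codimension. -/
lemma factA (hV : IsLinearlyCompact 𝕂 V) {U : Submodule 𝕂 V} (hU : IsOpen (U : Set V)) :
    FiniteDimensional 𝕂 (V ⧸ U) := by
  classical
  by_contra hFD
  set B := Basis.ofVectorSpace 𝕂 (V ⧸ U) with hB
  haveI : Infinite (Module.Basis.ofVectorSpaceIndex 𝕂 (V ⧸ U)) := by
    by_contra hinf
    haveI : Finite (Module.Basis.ofVectorSpaceIndex 𝕂 (V ⧸ U)) := not_infinite_iff_finite.mp hinf
    haveI := Fintype.ofFinite (Module.Basis.ofVectorSpaceIndex 𝕂 (V ⧸ U))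
    exact hFD (Module.Finite.of_basis B)
  set emb := Infinite.natEmbedding (Module.Basis.ofVectorSpaceIndex 𝕂 (V ⧸ U)) with hemb
  set f : ℕ → (V →ₗ[𝕂] 𝕂) := fun n => (B.coord (emb n)) ∘ₗ U.mkQ with hf
  have hUle : ∀ n, U ≤ LinearMap.ker (f n) := by
    intro n x hx
    rw [LinearMap.mem_ker, hf]
    simp only [LinearMap.comp_apply, Submodule.mkQ_apply]
    rw [(Submodule.Quotient.mk_eq_zero U).mpr hx]
    simp
  have hclosed : ∀ n, IsClosed ((LinearMap.ker (f n) : Submodule 𝕂 V) : Set V) := by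
    intro n
    have hopen : IsOpen ((LinearMap.ker (f n) : Submodule 𝕂 V) : Set V) :=
      submodule_isOpen_mono (hUle n) hU
    exact (LinearMap.ker (f n)).toAddSubgroup.isClosed_of_isOpen hopen
  have hex : ∀ n, ∃ t : V, U.mkQ t = B (emb n) := fun n => U.mkQ_surjective _
  choose t ht using hex
  have hft : ∀ n m, f n (t m) = if emb m = emb n then (1:𝕂) else 0 := by
    intro n m
    rw [hf]
    simp only [LinearMap.comp_apply, Submodule.mkQ_apply]
    rw [show (Submodule.Quotient.mk (t m) : V ⧸ U) = U.mkQ (t m) from rfl, ht m]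
    rw [Basis.coord_apply, Basis.repr_self]
    simp [Finsupp.single_apply]
  have hFIP : ∀ F : Finset ℕ,
      (⋂ n ∈ F, ((t n + ·) '' ((LinearMap.ker (f n) : Submodule 𝕂 V) : Set V))).Nonempty := by
    intro F
    refine ⟨∑ m ∈ F, t m, ?_⟩
    simp only [Set.mem_iInter]
    intro n hn
    refine ⟨(∑ m ∈ F, t m) - t n, ?_, by simp⟩
    rw [SetLike.mem_coe, LinearMap.mem_ker, map_sub, map_sum]
    have hite : ∀ m, (if emb m = emb n then (1:𝕂) else 0) = if m = n then 1 else 0 := by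
      intro m
      by_cases h : m = n
      · simp [h]
      · have h2 : emb m ≠ emb n := fun hh => h (emb.injective hh)
        simp [h, h2]
    have hsum1 : ∑ m ∈ F, f n (t m) = 1 := by
      rw [Finset.sum_congr rfl (fun m _ => by rw [hft n m, hite m])]
      rw [Finset.sum_ite_eq' F n (fun _ => (1:𝕂))]
      simp [hn]
    rw [hsum1, hft n n]
    simp
  obtain ⟨y, hy⟩ := hV.2.2 ℕ (fun n => LinearMap.ker (f n)) t hclosed hFIP
  have hfy : ∀ n, f n y = 1 := by
    intro n
    obtain ⟨u, hu, hyu⟩ := Set.mem_iInter.mp hy n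
    rw [← hyu, map_add, hft n n]
    rw [SetLike.mem_coe, LinearMap.mem_ker] at hu
    simp [hu]
  have hsupp : ∀ n, emb n ∈ (B.repr (U.mkQ y)).support := by
    intro n
    rw [Finsupp.mem_support_iff]
    have h1 := hfy n
    rw [hf] at h1
    simp only [LinearMap.comp_apply, Submodule.mkQ_apply] at h1
    rw [Basis.coord_apply] at h1
    rw [show (Submodule.Quotient.mk y : V ⧸ U) = U.mkQ y from rfl] at h1
    rw [h1]
    exact one_ne_zero
  haveI : Infinite {x // x ∈ (B.repr (U.mkQ y)).support} :=
    Infinite.of_injective (fun n => ⟨emb n, hsupp n⟩)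
      (fun a b hab => emb.injective (by simpa using congrArg Subtype.val hab))
  exact not_finite {x // x ∈ (B.repr (U.mkQ y)).support}

end Aux4
section Aux5

variable {𝕂 V : Type*} [Field 𝕂] [AddCommGroup V] [Module 𝕂 V]
  [TopologicalSpace V] [IsTopologicalAddGroup V]

/-- orbit linear independence implies non-stationarity (uses linear compactness) -/
lemma not_isOpen_cotraj_of_orbit_li (hV : IsLinearlyCompact 𝕂 V) {φ : V →ₗ[𝕂] V}
    {g : V →ₗ[𝕂] 𝕂} (horb : LinearIndependent 𝕂 (fun m : ℕ => g ∘ₗ φ ^ m)) :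
    ¬ IsOpen ((Cotraj φ (LinearMap.ker g) : Submodule 𝕂 V) : Set V) := by
  intro hop
  haveI hFD := factA hV hop
  set d := Module.finrank 𝕂 (V ⧸ Cotraj φ (LinearMap.ker g)) with hd
  set C' : Submodule 𝕂 V := ⨅ p : Fin (d+1), LinearMap.ker (g ∘ₗ φ ^ (p : ℕ)) with hC'
  have hli : LinearIndependent 𝕂 (fun p : Fin (d+1) => g ∘ₗ φ ^ (p : ℕ)) :=
    horb.comp (fun p : Fin (d+1) => (p : ℕ)) Fin.val_injective
  have hfr : Module.finrank 𝕂 (V ⧸ C') = d + 1 := by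
    rw [hC', finrank_quot_iInf_ker_eq _ hli, Fintype.card_fin]
  have hle : Cotraj φ (LinearMap.ker g) ≤ C' := by
    rw [cotraj_ker_eq_iInf, hC']
    exact le_iInf fun p => iInf_le _ (p : ℕ)
  set q := Submodule.mapQ (Cotraj φ (LinearMap.ker g)) C' LinearMap.id (by simpa using hle) with hq
  have hqsurj : Function.Surjective q := by
    intro y
    obtain ⟨v, rfl⟩ := C'.mkQ_surjective y
    exact ⟨(Cotraj φ (LinearMap.ker g)).mkQ v, by simp [hq, Submodule.mapQ_apply]⟩
  have hrn := LinearMap.finrank_range_add_finrank_ker q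
  rw [LinearMap.range_eq_top.mpr hqsurj] at hrn
  have htop : Module.finrank 𝕂 ↥(⊤ : Submodule 𝕂 (V ⧸ C')) = Module.finrank 𝕂 (V ⧸ C') :=
    finrank_top 𝕂 _
  omega

/-- coindependence of cotrajectories from joint orbit independence, via linear compactness -/
lemma coindep_of_orbit_li (hV : IsLinearlyCompact 𝕂 V) {φ : V →ₗ[𝕂] V} (hφ : Continuous φ)
    {g : ℕ → (V →ₗ[𝕂] 𝕂)}
    (hli : LinearIndependent 𝕂 (fun q : ℕ × ℕ => (g q.1) ∘ₗ φ ^ q.2))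
    (hop : ∀ n, IsOpen ((LinearMap.ker (g n) : Submodule 𝕂 V) : Set V)) :
    Coindependent 𝕂 (fun n => Cotraj φ (LinearMap.ker (g n))) := by
  classical
  intro F i hiF
  rw [eq_top_iff]
  intro x _
  set ι := {j // j ∈ F} × ℕ with hι
  set N' : ι → Submodule 𝕂 V := fun p => LinearMap.ker ((g (p.1 : ℕ)) ∘ₗ φ ^ p.2) with hN'
  set v' : ι → V := fun p => if (p.1 : ℕ) = i then 0 else x with hv'
  have hclosed : ∀ p, IsClosed ((N' p : Submodule 𝕂 V) : Set V) := fun p =>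
    (N' p).toAddSubgroup.isClosed_of_isOpen (isOpen_ker_comp_pow hφ (hop _) _)
  have hFIP : ∀ S : Finset ι, (⋂ p ∈ S, ((v' p + ·) '' ((N' p : Submodule 𝕂 V) : Set V))).Nonempty := by
    intro S
    have hliS : LinearIndependent 𝕂 (fun p : {p // p ∈ S} => (g ((p : ι).1 : ℕ)) ∘ₗ φ ^ (p : ι).2) :=
      hli.comp (fun p : {p // p ∈ S} => (((p : ι).1 : ℕ), (p : ι).2))
        (by
          intro a b hab
          have hab' : ((((a : ι).1 : ℕ)), (a : ι).2) = ((((b : ι).1 : ℕ)), (b : ι).2) := hab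
          apply Subtype.ext
          obtain ⟨h1, h2⟩ := Prod.mk.inj hab'
          exact Prod.ext (Subtype.ext h1) h2)
    obtain ⟨z, hz⟩ := surj_of_li _ hliS
      (fun p => if ((p : ι).1 : ℕ) = i then 0 else ((g ((p : ι).1 : ℕ)) ∘ₗ φ ^ (p : ι).2) x)
    refine ⟨z, ?_⟩
    simp only [Set.mem_iInter]
    intro p hp
    have hzp := congrFun hz ⟨p, hp⟩
    simp only [LinearMap.pi_apply] at hzp
    refine ⟨z - v' p, ?_, by simp⟩
    rw [SetLike.mem_coe, hN', LinearMap.mem_ker]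
    by_cases hcase : (p.1 : ℕ) = i
    · have hz0 : ((g (p.1 : ℕ)) ∘ₗ φ ^ p.2) z = 0 := by rw [hzp, if_pos hcase]
      have hv0 : v' p = 0 := by rw [hv']; exact if_pos hcase
      rw [hv0, sub_zero, hz0]
    · have hzx : ((g (p.1 : ℕ)) ∘ₗ φ ^ p.2) z = ((g (p.1 : ℕ)) ∘ₗ φ ^ p.2) x := by
        rw [hzp, if_neg hcase]
      have hvx : v' p = x := by rw [hv']; exact if_neg hcase
      rw [hvx, map_sub, hzx, sub_self]
  obtain ⟨y, hy⟩ := hV.2.2 ι N' v' hclosed hFIP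
  have hmem : ∀ p : ι, ∃ u ∈ N' p, v' p + u = y := by
    intro p
    obtain ⟨u, hu, huy⟩ := Set.mem_iInter.mp hy p
    exact ⟨u, hu, huy⟩
  have hyC : y ∈ Cotraj φ (LinearMap.ker (g i)) := by
    rw [cotraj_ker_eq_iInf, Submodule.mem_iInf]
    intro m
    obtain ⟨u, hu, huy⟩ := hmem ⟨⟨i, hiF⟩, m⟩
    rw [hv'] at huy
    simp only [if_pos] at huy
    rw [← huy]
    simpa [hN'] using hu
  have hxyC : x - y ∈ ⨅ j ∈ F, ⨅ _ : j ≠ i, Cotraj φ (LinearMap.ker (g j)) := by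
    rw [Submodule.mem_iInf]
    intro j
    rw [Submodule.mem_iInf]
    intro hjF
    rw [Submodule.mem_iInf]
    intro hji
    rw [cotraj_ker_eq_iInf, Submodule.mem_iInf]
    intro m
    obtain ⟨u, hu, huy⟩ := hmem ⟨⟨j, hjF⟩, m⟩
    rw [hv'] at huy
    simp only [hji, if_neg, if_false] at huy
    have : y - x = u := by rw [← huy]; abel
    rw [LinearMap.mem_ker]
    have hu' : ((g j) ∘ₗ φ ^ m) (y - x) = 0 := by rw [this]; simpa [hN'] using hu
    have : ((g j) ∘ₗ φ ^ m) (x - y) = - ((g j) ∘ₗ φ ^ m) (y - x) := by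
      rw [← map_neg]; congr 1; abel
    rw [this, hu']
    simp
  exact Submodule.mem_sup.mpr ⟨y, hyC, x - y, hxyC, by abel⟩

end Aux5
section Aux6

lemma le_limsup_of_eventually {f : ℕ → ℝ≥0∞} {a : ℝ≥0∞} (h : ∀ᶠ n in Filter.atTop, a ≤ f n) :
    a ≤ Filter.atTop.limsup f :=
  Filter.le_limsup_of_frequently_le h.frequently

lemma limsup_le_of_eventually {f : ℕ → ℝ≥0∞} {a : ℝ≥0∞} (h : ∀ᶠ n in Filter.atTop, f n ≤ a) :
    Filter.atTop.limsup f ≤ a :=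
  Filter.limsup_le_of_le (by isBoundedDefault) h

variable {𝕂 V : Type*} [Field 𝕂] [AddCommGroup V] [Module 𝕂 V]
  [TopologicalSpace V] [IsTopologicalAddGroup V]

lemma chunk_li_of_coindep {φ : V →ₗ[𝕂] V} (hφ : Continuous φ) {U : ℕ → Submodule 𝕂 V}
    {g : ℕ → (V →ₗ[𝕂] 𝕂)} (hgker : ∀ n, LinearMap.ker (g n) = U n)
    (holi : ∀ n, LinearIndependent 𝕂 (fun m : ℕ => (g n) ∘ₗ φ ^ m))
    (hco : Coindependent 𝕂 (fun n => Cotraj φ (U n))) (K : ℕ) :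
    LinearIndependent 𝕂 (fun q : Fin K × ℕ => (g (q.1 : ℕ)) ∘ₗ φ ^ q.2) := by
  classical
  rw [linearIndependent_iff']
  intro s c hsum q hq
  set j₀ := q.1 with hj₀
  set T₁ := s.filter (fun p => p.1 = j₀) with hT₁
  set T₂ := s.filter (fun p => ¬ p.1 = j₀) with hT₂
  set h : V →ₗ[𝕂] 𝕂 := ∑ p ∈ T₁, c p • ((g (j₀ : ℕ)) ∘ₗ φ ^ p.2) with hh
  have hT₁eq : ∑ p ∈ T₁, c p • ((g ((p.1 : Fin K) : ℕ)) ∘ₗ φ ^ p.2) = h := by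
    rw [hh]
    refine Finset.sum_congr rfl fun p hp => ?_
    rw [(Finset.mem_filter.mp hp).2]
  have hsplit : h + (∑ p ∈ T₂, c p • ((g ((p.1 : Fin K) : ℕ)) ∘ₗ φ ^ p.2)) = 0 := by
    rw [← hT₁eq, hT₁, hT₂, Finset.sum_filter_add_sum_filter_not]
    exact hsum
  have hvan1 : ∀ y ∈ Cotraj φ (U (j₀ : ℕ)), h y = 0 := by
    intro y hy
    rw [← hgker (j₀ : ℕ), cotraj_ker_eq_iInf, Submodule.mem_iInf] at hy
    rw [hh, LinearMap.sum_apply]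
    refine Finset.sum_eq_zero fun p hp => ?_
    rw [LinearMap.smul_apply]
    have hk := hy p.2
    rw [LinearMap.mem_ker] at hk
    rw [hk, smul_zero]
  have hvan2 : ∀ y ∈ (⨅ j ∈ Finset.range K, ⨅ _ : j ≠ (j₀ : ℕ), Cotraj φ (U j)), h y = 0 := by
    intro y hy
    have hneg : h = - ∑ p ∈ T₂, c p • ((g ((p.1 : Fin K) : ℕ)) ∘ₗ φ ^ p.2) :=
      eq_neg_of_add_eq_zero_left hsplit
    rw [hneg, LinearMap.neg_apply, LinearMap.sum_apply]
    rw [neg_eq_zero]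
    refine Finset.sum_eq_zero fun p hp => ?_
    rw [LinearMap.smul_apply]
    have hp2 := Finset.mem_filter.mp hp
    have hne : ((p.1 : Fin K) : ℕ) ≠ (j₀ : ℕ) := by
      intro hcontra
      exact hp2.2 (Fin.val_injective hcontra)
    have hmem1 := (Submodule.mem_iInf _).mp hy ((p.1 : Fin K) : ℕ)
    have hmem2 := (Submodule.mem_iInf _).mp hmem1 (Finset.mem_range.mpr p.1.2)
    have hmem3 := (Submodule.mem_iInf _).mp hmem2 hne
    rw [← hgker, cotraj_ker_eq_iInf, Submodule.mem_iInf] at hmem3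
    have hk := hmem3 p.2
    rw [LinearMap.mem_ker] at hk
    rw [hk, smul_zero]
  have hzero : h = 0 := by
    refine LinearMap.ext fun y0 => ?_
    have hx := hco (Finset.range K) (j₀ : ℕ) (Finset.mem_range.mpr j₀.2)
    have hy0 : y0 ∈ Cotraj φ (U (j₀ : ℕ)) ⊔ (⨅ j ∈ Finset.range K, ⨅ _ : j ≠ (j₀ : ℕ),
        Cotraj φ (U j)) := by
      rw [hx]; exact Submodule.mem_top
    obtain ⟨a, ha, b, hb, hab⟩ := Submodule.mem_sup.mp hy0
    rw [← hab, map_add, hvan1 a ha, hvan2 b hb]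
    simp
  have himg : ∑ m ∈ T₁.image Prod.snd, c (j₀, m) • ((g (j₀ : ℕ)) ∘ₗ φ ^ m) = 0 := by
    rw [Finset.sum_image (fun p hp r hr hpr =>
      Prod.ext ((Finset.mem_filter.mp hp).2.trans ((Finset.mem_filter.mp hr).2).symm) hpr)]
    rw [← hzero, hh]
    refine Finset.sum_congr rfl fun p hp => ?_
    have hp1 : p.1 = j₀ := (Finset.mem_filter.mp hp).2
    congr 1
    rw [← hp1]
  have hq₁ : q ∈ T₁ := Finset.mem_filter.mpr ⟨hq, rfl⟩
  have := linearIndependent_iff'.mp (holi (j₀ : ℕ)) (T₁.image Prod.snd)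
    (fun m => c (j₀, m)) himg q.2 (Finset.mem_image.mpr ⟨q, hq₁, rfl⟩)
  simpa using this

lemma backward_entStar (φ : V →ₗ[𝕂] V) (hφ : Continuous φ) (U : ℕ → Submodule 𝕂 V)
    (hop : ∀ n, IsOpen ((U n : Set V)))
    (hcod1 : ∀ n, Module.finrank 𝕂 (V ⧸ U n) = 1)
    (hns : ∀ n, ¬ IsOpen ((Cotraj φ (U n) : Set V)))
    (hco : Coindependent 𝕂 (fun n => Cotraj φ (U n))) :
    entStar 𝕂 V φ = ⊤ := by
  classical
  have hgex : ∀ n, ∃ g : V →ₗ[𝕂] 𝕂, LinearMap.ker g = U n :=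
    fun n => exists_functional_of_cocyclic (hcod1 n)
  choose g hgker using hgex
  have holi : ∀ n, LinearIndependent 𝕂 (fun m : ℕ => (g n) ∘ₗ φ ^ m) := by
    intro n
    refine orbit_li_of_not_isOpen hφ ?_ ?_
    · rw [hgker n]; exact hop n
    · rw [hgker n]; exact hns n
  have hchunk := chunk_li_of_coindep hφ hgker holi hco
  have hall : ∀ k : ℕ, (k : ℝ≥0∞) ≤ entStar 𝕂 V φ := by
    intro k
    set K := 2 * k + 2 with hK
    set W : Submodule 𝕂 V := ⨅ j : Fin K, U (j : ℕ) with hW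
    have hWopen : IsOpen ((W : Set V)) := isOpen_iInf_fin _ (fun j => hop _)
    have hWker : W = ⨅ j : Fin K, LinearMap.ker (g (j : ℕ)) := by
      rw [hW]
      exact (iInf_congr fun j => (hgker _)).symm
    have hfam0 : LinearIndependent 𝕂 (fun j : Fin K => g (j : ℕ)) := by
      have h0 := (hchunk K).comp (fun j : Fin K => (j, 0))
        (fun a b hab => congrArg Prod.fst hab)
      have heq : (fun j : Fin K => g (j : ℕ) ∘ₗ φ ^ (0:ℕ)) = fun j : Fin K => g (j : ℕ) := by
        funext j
        rw [pow_zero, Module.End.one_eq_id, LinearMap.comp_id]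
      rwa [show ((fun q : Fin K × ℕ => (g (q.1 : ℕ)) ∘ₗ φ ^ q.2) ∘ (fun j : Fin K => (j, 0)))
        = fun j : Fin K => g (j : ℕ) ∘ₗ φ ^ (0:ℕ) from rfl, heq] at h0
    have hfrW : Module.finrank 𝕂 (V ⧸ W) = K := by
      rw [hWker, finrank_quot_iInf_ker_eq _ hfam0, Fintype.card_fin]
    have hCn : ∀ n : ℕ, Cn φ W n
        = ⨅ p : Fin K × Fin n, LinearMap.ker ((g ((p.1 : Fin K) : ℕ)) ∘ₗ φ ^ ((p.2 : Fin n) : ℕ)) := by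
      intro n
      ext x
      constructor
      · intro hx
        rw [Submodule.mem_iInf]
        intro p
        rw [LinearMap.mem_ker, LinearMap.comp_apply]
        have h1 := (Submodule.mem_iInf _).mp hx ((p.2 : Fin n) : ℕ)
        have h2 := (Submodule.mem_iInf _).mp h1 (Finset.mem_range.mpr p.2.2)
        rw [Submodule.mem_comap, hW, Submodule.mem_iInf] at h2
        have h3 := h2 p.1
        rw [← hgker, LinearMap.mem_ker] at h3
        exact h3
      · intro hx
        rw [Cn, Submodule.mem_iInf]
        intro m
        rw [Submodule.mem_iInf]
        intro hm
        rw [Submodule.mem_comap, hW, Submodule.mem_iInf]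
        intro j
        rw [← hgker, LinearMap.mem_ker]
        have h1 := (Submodule.mem_iInf _).mp hx (j, ⟨m, Finset.mem_range.mp hm⟩)
        rw [LinearMap.mem_ker, LinearMap.comp_apply] at h1
        exact h1
    have hliKn : ∀ n : ℕ, LinearIndependent 𝕂
        (fun p : Fin K × Fin n => (g ((p.1 : Fin K) : ℕ)) ∘ₗ φ ^ ((p.2 : Fin n) : ℕ)) := by
      intro n
      exact (hchunk K).comp (fun p : Fin K × Fin n => (p.1, (p.2 : ℕ)))
        (fun a b hab => by
          obtain ⟨h1, h2⟩ := Prod.mk.inj hab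
          exact Prod.ext h1 (Fin.val_injective h2))
    have hfrCn : ∀ n : ℕ, Module.finrank 𝕂 (V ⧸ Cn φ W n) = K * n := by
      intro n
      rw [hCn n, finrank_quot_iInf_ker_eq _ (hliKn n), Fintype.card_prod,
        Fintype.card_fin, Fintype.card_fin]
    have hFDCn : ∀ n : ℕ, FiniteDimensional 𝕂 (V ⧸ Cn φ W n) := by
      intro n
      rw [hCn n]
      exact fd_quot_iInf_ker _
    have hlow : ∀ n : ℕ, 2 ≤ n → (k : ℝ≥0∞) ≤
        (((Module.rank 𝕂 (↥W ⧸ Submodule.comap W.subtype (Cn φ W n))).toENat : ℕ∞) : ℝ≥0∞) /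
          (n : ℝ≥0∞) := by
      intro n hn
      haveI := hFDCn n
      have hle : Cn φ W n ≤ W := by
        intro x hx
        have h1 := (Submodule.mem_iInf _).mp hx 0
        have h2 := (Submodule.mem_iInf _).mp h1 (Finset.mem_range.mpr (by omega))
        rw [Submodule.mem_comap, pow_zero] at h2
        simpa using h2
      obtain ⟨hFDq, hfrq⟩ := finrank_quot_rel (Cn φ W n) W hle
      haveI := hFDq
      rw [hfrW, hfrCn n] at hfrq
      have hrank : (Module.rank 𝕂 (↥W ⧸ Submodule.comap W.subtype (Cn φ W n))).toENat
          = ((Module.finrank 𝕂 (↥W ⧸ Submodule.comap W.subtype (Cn φ W n)) : ℕ∞)) := by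
        rw [← Module.finrank_eq_rank, Cardinal.toENat_nat]
      rw [hrank]
      rw [ENNReal.le_div_iff_mul_le (Or.inl (by exact_mod_cast (show n ≠ 0 by omega)))
        (Or.inl (ENNReal.natCast_ne_top n))]
      have hnat : k * n ≤ Module.finrank 𝕂 (↥W ⧸ Submodule.comap W.subtype (Cn φ W n)) := by
        have : Module.finrank 𝕂 (↥W ⧸ Submodule.comap W.subtype (Cn φ W n)) = K * n - K := by
          omega
        rw [this, hK]
        have h2n : 2 ≤ n := hn
        nlinarith
      calc (k : ℝ≥0∞) * (n : ℝ≥0∞) = ((k * n : ℕ) : ℝ≥0∞) := by norm_cast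
      _ ≤ ((Module.finrank 𝕂 (↥W ⧸ Submodule.comap W.subtype (Cn φ W n)) : ℕ) : ℝ≥0∞) := by
          exact_mod_cast hnat
      _ = (((Module.finrank 𝕂 (↥W ⧸ Submodule.comap W.subtype (Cn φ W n)) : ℕ∞)) : ℝ≥0∞) := by
          norm_cast
    have hHW : (k : ℝ≥0∞) ≤ HStar φ W :=
      le_limsup_of_eventually (Filter.eventually_atTop.mpr ⟨2, hlow⟩)
    refine le_trans hHW ?_
    exact le_iSup₂ (f := fun (U' : Submodule 𝕂 V) (_ : IsOpen ((U' : Set V))) => HStar φ U')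
      W hWopen
  by_contra hne
  obtain ⟨m, hm⟩ := ENNReal.exists_nat_gt (lt_top_iff_ne_top.mpr hne).ne
  exact absurd (hall m) (not_le.mpr hm)

end Aux6
section Aux7

variable {𝕂 V : Type*} [Field 𝕂] [AddCommGroup V] [Module 𝕂 V]

/-- precomposition with `φ` as a linear map on functionals -/
noncomputable def precL (φ : V →ₗ[𝕂] V) : (V →ₗ[𝕂] 𝕂) →ₗ[𝕂] (V →ₗ[𝕂] 𝕂) :=
  (LinearMap.llcomp 𝕂 V V 𝕂).flip φ

lemma precL_apply (φ : V →ₗ[𝕂] V) (w : V →ₗ[𝕂] 𝕂) : precL φ w = w ∘ₗ φ := rfl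

/-- the span of the first `n` steps of the orbits of a finite family of functionals -/
noncomputable def Tn (φ : V →ₗ[𝕂] V) {d : ℕ} (f : Fin d → (V →ₗ[𝕂] 𝕂)) (n : ℕ) :
    Submodule 𝕂 (V →ₗ[𝕂] 𝕂) :=
  Submodule.span 𝕂 (Set.range (fun p : Fin d × Fin n => (f p.1) ∘ₗ φ ^ ((p.2 : Fin n) : ℕ)))

lemma Tn_fd (φ : V →ₗ[𝕂] V) {d : ℕ} (f : Fin d → (V →ₗ[𝕂] 𝕂)) (n : ℕ) :
    FiniteDimensional 𝕂 (Tn φ f n) :=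
  FiniteDimensional.span_of_finite _ (Set.finite_range _)

lemma Tn_mono (φ : V →ₗ[𝕂] V) {d : ℕ} (f : Fin d → (V →ₗ[𝕂] 𝕂)) {n m : ℕ} (h : n ≤ m) :
    Tn φ f n ≤ Tn φ f m := by
  apply Submodule.span_mono
  rintro y ⟨p, rfl⟩
  exact ⟨(p.1, Fin.castLE h p.2), rfl⟩

lemma Tn_map_precL (φ : V →ₗ[𝕂] V) {d : ℕ} (f : Fin d → (V →ₗ[𝕂] 𝕂)) (n : ℕ) :
    Submodule.map (precL φ) (Tn φ f n) ≤ Tn φ f (n + 1) := by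
  rw [Tn, Submodule.map_span]
  apply Submodule.span_le.mpr
  rintro y ⟨y', ⟨p, rfl⟩, rfl⟩
  apply Submodule.subset_span
  refine ⟨(p.1, ⟨(p.2 : ℕ) + 1, by omega⟩), ?_⟩
  show f p.1 ∘ₗ φ ^ ((p.2 : ℕ) + 1) = precL φ (f p.1 ∘ₗ φ ^ ((p.2 : ℕ)))
  rw [precL_apply]
  ext x
  simp [pow_succ, Module.End.mul_apply]

lemma Tn_succ (φ : V →ₗ[𝕂] V) {d : ℕ} (f : Fin d → (V →ₗ[𝕂] 𝕂)) (n : ℕ) :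
    Tn φ f (n + 1) = Tn φ f 1 ⊔ Submodule.map (precL φ) (Tn φ f n) := by
  apply le_antisymm
  · rw [Tn]
    apply Submodule.span_le.mpr
    rintro y ⟨p, rfl⟩
    rcases Nat.eq_zero_or_pos (p.2 : ℕ) with h0 | hpos
    · apply Submodule.mem_sup_left
      apply Submodule.subset_span
      refine ⟨(p.1, ⟨0, by omega⟩), ?_⟩
      show f p.1 ∘ₗ φ ^ (0 : ℕ) = f p.1 ∘ₗ φ ^ ((p.2 : ℕ))
      rw [h0]
    · apply Submodule.mem_sup_right
      have hlt : (p.2 : ℕ) - 1 < n := by omega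
      refine ⟨(f p.1) ∘ₗ φ ^ ((p.2 : ℕ) - 1), ?_, ?_⟩
      · exact Submodule.subset_span ⟨(p.1, ⟨(p.2 : ℕ) - 1, hlt⟩), rfl⟩
      · show precL φ (f p.1 ∘ₗ φ ^ ((p.2 : ℕ) - 1)) = f p.1 ∘ₗ φ ^ ((p.2 : ℕ))
        rw [precL_apply]
        have hps : (p.2 : ℕ) = ((p.2 : ℕ) - 1) + 1 := by omega
        rw [hps, pow_succ]
        ext x
        simp [Module.End.mul_apply]
  · apply sup_le
    · exact Tn_mono φ f (by omega)
    · exact Tn_map_precL φ f n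
-- note: fix comp_assoc direction if needed

lemma mem_Tn_comp_pow (φ : V →ₗ[𝕂] V) {d : ℕ} (f : Fin d → (V →ₗ[𝕂] 𝕂)) {w : V →ₗ[𝕂] 𝕂}
    {a : ℕ} (hw : w ∈ Tn φ f a) (m : ℕ) : (w ∘ₗ φ ^ m) ∈ Tn φ f (a + m) := by
  induction m with
  | zero => simpa [pow_zero, Module.End.one_eq_id, LinearMap.comp_id] using hw
  | succ m ih =>
    have h1 : w ∘ₗ φ ^ (m + 1) = precL φ (w ∘ₗ φ ^ m) := by
      rw [precL_apply]
      ext x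
      simp [pow_succ, Module.End.mul_apply]
    rw [show a + (m + 1) = (a + m) + 1 by omega, h1]
    exact Tn_map_precL φ f (a + m) (Submodule.mem_map_of_mem ih)

end Aux7

lemma finrank_range_add_finrank_ker_quot {K W : Type*} [Field K] [AddCommGroup W] [Module K W]
    (p q : Submodule K W) [FiniteDimensional K q] (g : q →ₗ[K] W ⧸ p) :
    finrank K (LinearMap.range g) + finrank K (LinearMap.ker g) = finrank K q :=
  LinearMap.finrank_range_add_finrank_ker g

lemma finrank_mono_sub {K W : Type*} [Field K] [AddCommGroup W] [Module K W]
    (q : Submodule K W) [FiniteDimensional K q] {s t : Submodule K q} (h : s ≤ t) :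
    finrank K s ≤ finrank K t :=
  Submodule.finrank_mono h

lemma eq_of_le_of_finrank_le_sub {K W : Type*} [Field K] [AddCommGroup W] [Module K W]
    (q : Submodule K W) [FiniteDimensional K q] {s t : Submodule K q} (h1 : s ≤ t)
    (h2 : finrank K t ≤ finrank K s) : s = t :=
  Submodule.eq_of_le_of_finrank_le h1 h2

lemma free_sub {K W : Type*} [Field K] [AddCommGroup W] [Module K W]
    (q : Submodule K W) : Module.Free K q :=
  Module.Free.of_divisionRing _ _

lemma exists_indep_mod {K W : Type*} [Field K] [AddCommGroup W] [Module K W]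
    (S T : Submodule K W) [FiniteDimensional K T] (k m : ℕ)
    (hm : finrank K (Submodule.comap T.subtype S) = m) (hk : k + m ≤ finrank K T) :
    ∃ wl : Fin k → T, ∀ c : Fin k → K, (∑ i, c i • ((wl i : T) : W)) ∈ S → ∀ i, c i = 0 := by
  classical
  have hfrQ : k ≤ finrank K (↥T ⧸ Submodule.comap T.subtype S) := by
    have h1 := Submodule.finrank_quotient_add_finrank (Submodule.comap T.subtype S)
    omega
  set Q := (↥T ⧸ Submodule.comap T.subtype S) with hQ
  set b := Module.finBasis K Q with hb
  set emb : Fin k → Fin (finrank K Q) := fun i => ⟨(i : ℕ), lt_of_lt_of_le i.2 hfrQ⟩ with hemb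
  have hembinj : Function.Injective emb := by
    intro x y hxy
    have h1 := congrArg Fin.val hxy
    exact Fin.ext h1
  have hex : ∀ i, ∃ w : ↥T, Submodule.Quotient.mk w = b (emb i) :=
    fun i => Submodule.mkQ_surjective _ _
  choose wl hwl using hex
  refine ⟨wl, fun c hc => ?_⟩
  have hz : (∑ i, c i • wl i) ∈ Submodule.comap T.subtype S := by
    rw [Submodule.mem_comap, map_sum]
    simpa using hc
  have hmk2 : ∑ i, c i • b (emb i) = (0 : Q) := by
    calc ∑ i, c i • b (emb i)
        = ∑ i, c i • (Submodule.Quotient.mk (wl i) : Q) := by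
          refine Finset.sum_congr rfl fun i _ => ?_
          rw [hwl i]
      _ = ∑ i, (Submodule.comap T.subtype S).mkQ (c i • wl i) := by
          refine Finset.sum_congr rfl fun i _ => ?_
          rw [map_smul]
          rfl
      _ = (Submodule.comap T.subtype S).mkQ (∑ i, c i • wl i) := by
          rw [map_sum]
      _ = 0 := by
          rw [Submodule.mkQ_apply]
          exact (Submodule.Quotient.mk_eq_zero _).mpr hz
  exact fun i => Fintype.linearIndependent_iff.mp (b.linearIndependent.comp emb hembinj) c hmk2 i

section Aux8

variable {𝕂 V : Type*} [Field 𝕂] [AddCommGroup V] [Module 𝕂 V]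
  [TopologicalSpace V] [IsTopologicalAddGroup V]

lemma growth_main (φ : V →ₗ[𝕂] V) (hφ : Continuous φ) {d : ℕ} (f : Fin d → (V →ₗ[𝕂] 𝕂))
    (hopf : ∀ i, IsOpen ((LinearMap.ker (f i) : Submodule 𝕂 V) : Set V)) (K : ℕ)
    (hnoP : ¬ ∃ v : Fin (K+1) → (V →ₗ[𝕂] 𝕂), (∀ i, IsOpen ((LinearMap.ker (v i) : Submodule 𝕂 V) : Set V)) ∧
        LinearIndependent 𝕂 (fun q : Fin (K+1) × ℕ => (v q.1) ∘ₗ φ ^ q.2)) :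
    ∃ C : ℕ, ∀ n, Module.finrank 𝕂 (Tn φ f n) ≤ C + K * n := by
  classical
  haveI : ∀ n, FiniteDimensional 𝕂 (Tn φ f n) := Tn_fd φ f
  set a : ℕ → ℕ := fun n => Module.finrank 𝕂 (Tn φ f n) with ha
  have amono : ∀ n, a n ≤ a (n+1) := fun n =>
    Submodule.finrank_mono (Tn_mono φ f (Nat.le_succ n))
  set u : (n : ℕ) → (↥(Tn φ f (n+1)) →ₗ[𝕂] ((V →ₗ[𝕂] 𝕂) ⧸ Tn φ f (n+1))) :=
    fun n => (Tn φ f (n+1)).mkQ ∘ₗ (precL φ) ∘ₗ (Tn φ f (n+1)).subtype with hu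
  have E1 : ∀ n, Module.finrank 𝕂 (LinearMap.range (u n))
      + Module.finrank 𝕂 (LinearMap.ker (u n)) = a (n+1) :=
    fun n => finrank_range_add_finrank_ker_quot _ _ (u n)
  have hrangeu : ∀ n, Submodule.map (Tn φ f (n+1)).mkQ (Tn φ f (n+2)) = LinearMap.range (u n) := by
    intro n
    have h1 : LinearMap.range (u n)
        = Submodule.map (Tn φ f (n+1)).mkQ (Submodule.map (precL φ) (Tn φ f (n+1))) := by
      rw [hu, LinearMap.range_comp, LinearMap.range_comp, Submodule.range_subtype]
    rw [h1, Tn_succ φ f (n+1), Submodule.map_sup]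
    have h2 : Submodule.map (Tn φ f (n+1)).mkQ (Tn φ f 1) = ⊥ := by
      rw [Submodule.eq_bot_iff]
      rintro y ⟨z, hz, rfl⟩
      rw [Submodule.mkQ_apply, Submodule.Quotient.mk_eq_zero]
      exact Tn_mono φ f (by omega) hz
    rw [h2, bot_sup_eq]
  have E2 : ∀ n, a (n+2) = a (n+1) + Module.finrank 𝕂 (LinearMap.range (u n)) := by
    intro n
    have hstar := finrank_map_mkQ_add (Tn φ f (n+1)) (Tn φ f (n+2))
    rw [hrangeu n] at hstar
    have hinf : Tn φ f (n+1) ⊓ Tn φ f (n+2) = Tn φ f (n+1) :=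
      inf_eq_left.mpr (Tn_mono φ f (by omega))
    rw [hinf] at hstar
    have hnn : a (n+1+1) = a (n+2) := rfl
    simp only [ha] at *
    omega
  have hcomaple : ∀ n, Submodule.comap (Tn φ f (n+1)).subtype (Tn φ f n) ≤ LinearMap.ker (u n) := by
    intro n x hx
    rw [LinearMap.mem_ker, hu]
    simp only [LinearMap.comp_apply, Submodule.subtype_apply]
    rw [Submodule.mkQ_apply, Submodule.Quotient.mk_eq_zero]
    exact Tn_map_precL φ f n (Submodule.mem_map_of_mem hx)
  have hcomapfr : ∀ n, Module.finrank 𝕂 (Submodule.comap (Tn φ f (n+1)).subtype (Tn φ f n)) = a n :=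
    fun n => (Submodule.comapSubtypeEquivOfLe (Tn_mono φ f (Nat.le_succ n))).finrank_eq
  have E3 : ∀ n, a n ≤ Module.finrank 𝕂 (LinearMap.ker (u n)) := by
    intro n
    rw [← hcomapfr n]
    exact finrank_mono_sub _ (hcomaple n)
  set D : ℕ → ℕ := fun n => a (n+1) - a n with hD
  have hDanti : ∀ n, D (n+1) ≤ D n := by
    intro n
    have e1 := E1 n
    have e2 := E2 n
    have e3 := E3 n
    have m1 := amono n
    have m2 := amono (n+1)
    have hnn : a (n+1+1) = a (n+2) := rfl
    simp only [hD]
    omega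
  obtain ⟨N, hN⟩ : ∃ N, D N = sInf (Set.range D) :=
    Set.mem_range.mp (Nat.sInf_mem (⟨D 0, 0, rfl⟩ : (Set.range D).Nonempty))
  have hanti : Antitone D := antitone_nat_of_succ_le hDanti
  have hconst : ∀ n, N ≤ n → D n = D N := by
    intro n hn
    refine le_antisymm (hanti hn) ?_
    rw [hN]
    exact Nat.sInf_le ⟨n, rfl⟩
  -- key injectivity property at levels ≥ N
  have hinj : ∀ n, N ≤ n → ∀ w : (V →ₗ[𝕂] 𝕂), w ∈ Tn φ f (n+1) → precL φ w ∈ Tn φ f (n+1) →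
      w ∈ Tn φ f n := by
    intro n hn w hw hpw
    have hkerfr : Module.finrank 𝕂 (LinearMap.ker (u n))
        ≤ Module.finrank 𝕂 (Submodule.comap (Tn φ f (n+1)).subtype (Tn φ f n)) := by
      have e1 := E1 n
      have e2 := E2 n
      have hc1 := hconst n hn
      have hc2 := hconst (n+1) (by omega)
      have m1 := amono n
      have m2 := amono (n+1)
      have hnn : a (n+1+1) = a (n+2) := rfl
      rw [hcomapfr n]
      simp only [hD] at hc1 hc2
      omega
    have hker_eq : Submodule.comap (Tn φ f (n+1)).subtype (Tn φ f n) = LinearMap.ker (u n) :=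
      eq_of_le_of_finrank_le_sub _ (hcomaple n) hkerfr
    have hxker : (⟨w, hw⟩ : ↥(Tn φ f (n+1))) ∈ LinearMap.ker (u n) := by
      rw [LinearMap.mem_ker, hu]
      simp only [LinearMap.comp_apply, Submodule.subtype_apply]
      rw [Submodule.mkQ_apply, Submodule.Quotient.mk_eq_zero]
      exact hpw
    rw [← hker_eq] at hxker
    exact hxker
  -- the stable growth rate is at most K
  have hDK : D N ≤ K := by
    by_contra hgt
    push_neg at hgt
    obtain ⟨wl, hbase'⟩ := exists_indep_mod (Tn φ f N) (Tn φ f (N+1)) (K+1) (a N) (hcomapfr N)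
      (by simp only [hD] at hgt; exact (show K + 1 + a N ≤ a (N+1) by omega))
    set v : Fin (K+1) → (V →ₗ[𝕂] 𝕂) := fun i => ((wl i : ↥(Tn φ f (N+1))) : (V →ₗ[𝕂] 𝕂)) with hv
    have hvT : ∀ i, v i ∈ Tn φ f (N+1) := fun i => (wl i).2
    have hbase : ∀ c : Fin (K+1) → 𝕂, (∑ i, c i • v i) ∈ Tn φ f N → ∀ i, c i = 0 :=
      fun c hc => hbase' c hc
    have hstar : ∀ m, ∀ c : Fin (K+1) → 𝕂,
        (∑ i, c i • (v i ∘ₗ φ ^ m)) ∈ Tn φ f (N+m) → ∀ i, c i = 0 := by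
      intro m
      induction m with
      | zero =>
        intro c hc
        have heq : (∑ i, c i • (v i ∘ₗ φ ^ (0:ℕ))) = ∑ i, c i • v i := by
          refine Finset.sum_congr rfl fun i _ => ?_
          rw [pow_zero, Module.End.one_eq_id, LinearMap.comp_id]
        rw [heq] at hc
        exact hbase c hc
      | succ m ih =>
        intro c hc
        set w : (V →ₗ[𝕂] 𝕂) := ∑ i, c i • (v i ∘ₗ φ ^ m) with hw
        have hwT : w ∈ Tn φ f (N+m+1) := by
          rw [hw]
          refine Submodule.sum_mem _ fun i _ => Submodule.smul_mem _ _ ?_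
          have := mem_Tn_comp_pow φ f (hvT i) m
          rwa [show (N+1)+m = N+m+1 by omega] at this
        have hpw : precL φ w ∈ Tn φ f (N+m+1) := by
          have hpweq : precL φ w = ∑ i, c i • (v i ∘ₗ φ ^ (m+1)) := by
            rw [hw, map_sum]
            refine Finset.sum_congr rfl fun i _ => ?_
            rw [map_smul]
            have hpe : precL φ (v i ∘ₗ φ ^ m) = v i ∘ₗ φ ^ (m+1) := by
              ext x
              simp [precL_apply, pow_succ, Module.End.mul_apply]
            rw [hpe]
          rw [hpweq]
          rwa [show N+(m+1) = N+m+1 by omega] at hc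
        have hwmem := hinj (N+m) (by omega) w hwT hpw
        exact ih c hwmem
    have hPI : PIndepF φ v := by
      have hS : ∀ Dg : ℕ, ∀ r : Fin (K+1) → Polynomial 𝕂,
          (∀ i, (r i).natDegree ≤ Dg) → (∑ i, XActL φ (v i) (r i)) = 0 → ∀ i, r i = 0 := by
        intro Dg
        induction Dg with
        | zero =>
          intro r hdeg hsum i
          have hC : ∀ j, r j = Polynomial.C ((r j).coeff 0) :=
            fun j => Polynomial.eq_C_of_natDegree_le_zero (hdeg j)
          have hXA : ∀ j, XActL φ (v j) (r j) = (r j).coeff 0 • (v j ∘ₗ φ ^ (0:ℕ)) := by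
            intro j
            conv_lhs => rw [hC j]
            rw [show Polynomial.C ((r j).coeff 0)
              = Polynomial.C ((r j).coeff 0) * Polynomial.X ^ (0:ℕ) by simp]
            exact XActL_monomial φ (v j) _ 0
          have hmem : (∑ j, (r j).coeff 0 • (v j ∘ₗ φ ^ (0:ℕ))) ∈ Tn φ f (N+0) := by
            rw [← Finset.sum_congr rfl fun j _ => hXA j, hsum]
            exact Submodule.zero_mem _
          have := hstar 0 (fun j => (r j).coeff 0) hmem i
          rw [hC i, this, map_zero]
        | succ Dg ihD =>
          intro r hdeg hsum i
          have hexp : ∀ j, XActL φ (v j) (r j)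
              = ∑ m ∈ Finset.range (Dg+1+1), (r j).coeff m • (v j ∘ₗ φ ^ m) := by
            intro j
            rw [XActL_apply, Polynomial.aeval_eq_sum_range'
              (by have := hdeg j; omega : (r j).natDegree < Dg+1+1)]
            ext x
            simp [LinearMap.sum_apply, LinearMap.smul_apply]
          have hsum2 : (∑ j, ∑ m ∈ Finset.range (Dg+1), (r j).coeff m • (v j ∘ₗ φ ^ m))
              + (∑ j, (r j).coeff (Dg+1) • (v j ∘ₗ φ ^ (Dg+1))) = 0 := by
            rw [← Finset.sum_add_distrib]
            have hstep : ∀ j : Fin (K+1),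
                (∑ m ∈ Finset.range (Dg+1), (r j).coeff m • (v j ∘ₗ φ ^ m))
                  + (r j).coeff (Dg+1) • (v j ∘ₗ φ ^ (Dg+1))
                = XActL φ (v j) (r j) := by
              intro j
              rw [hexp j]
              exact (Finset.sum_range_succ _ (Dg+1)).symm
            rw [Finset.sum_congr rfl fun j _ => hstep j]
            exact hsum
          have htop : (∑ j, (r j).coeff (Dg+1) • (v j ∘ₗ φ ^ (Dg+1)))
              = - ∑ j, ∑ m ∈ Finset.range (Dg+1), (r j).coeff m • (v j ∘ₗ φ ^ m) :=
            eq_neg_of_add_eq_zero_right hsum2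
          have hmem : (∑ j, (r j).coeff (Dg+1) • (v j ∘ₗ φ ^ (Dg+1))) ∈ Tn φ f (N+(Dg+1)) := by
            rw [htop]
            refine Submodule.neg_mem _ (Submodule.sum_mem _ fun j _ =>
              Submodule.sum_mem _ fun m hm => Submodule.smul_mem _ _ ?_)
            have h1 := mem_Tn_comp_pow φ f (hvT j) m
            have h2 : (N+1)+m ≤ N+(Dg+1) := by
              have := Finset.mem_range.mp hm
              omega
            exact Tn_mono φ f h2 h1
          have hcoefftop : ∀ j, (r j).coeff (Dg+1) = 0 :=
            hstar (Dg+1) (fun j => (r j).coeff (Dg+1)) hmem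
          have hdeg' : ∀ j, (r j).natDegree ≤ Dg := by
            intro j
            rw [Polynomial.natDegree_le_iff_coeff_eq_zero]
            intro m hm
            rcases Nat.lt_or_ge m (Dg+2) with hm2 | hm2
            · have : m = Dg+1 := by omega
              rw [this]
              exact hcoefftop j
            · exact Polynomial.coeff_eq_zero_of_natDegree_lt (by have := hdeg j; omega)
          exact ihD r hdeg' hsum i
      intro r hsum i
      exact hS (Finset.univ.sup fun j => (r j).natDegree) r
        (fun j => Finset.le_sup (f := fun j => (r j).natDegree) (Finset.mem_univ j)) hsum i
    apply hnoP
    refine ⟨v, ?_, (pindepF_iff_chunkLI φ v).mp hPI⟩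
    intro i
    exact isOpen_ker_of_mem_span (fun p : Fin d × Fin (N+1) => (f p.1) ∘ₗ φ ^ ((p.2 : Fin (N+1)) : ℕ))
      (fun p => isOpen_ker_comp_pow hφ (hopf p.1) _) (hvT i)
  -- conclude the linear bound
  refine ⟨a N, ?_⟩
  have hmono : Monotone a := monotone_nat_of_le_succ amono
  have hstepb : ∀ j, a (N + j) ≤ a N + K * j := by
    intro j
    induction j with
    | zero => simp
    | succ j ih =>
      have h1 : a (N + j + 1) = a (N + j) + D (N + j) := by
        have := amono (N + j)
        simp only [hD]
        omega
      have h2 : D (N + j) ≤ K := by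
        rw [hconst (N + j) (by omega)]
        exact hDK
      rw [show N + (j+1) = N + j + 1 by omega, h1]
      have : a N + K * (j + 1) = a N + K * j + K := by ring
      omega
  intro n
  rcases le_or_gt n N with hn | hn
  · calc a n ≤ a N := hmono hn
    _ ≤ a N + K * n := by omega
  · obtain ⟨j, rfl⟩ := Nat.exists_eq_add_of_le hn.le
    calc a (N + j) ≤ a N + K * j := hstepb j
    _ ≤ a N + K * (N + j) := by
        have : j ≤ N + j := by omega
        exact Nat.add_le_add_left (Nat.mul_le_mul_left K this) _

end Aux8
section Aux9

variable {𝕂 V : Type*} [Field 𝕂] [AddCommGroup V] [Module 𝕂 V]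

lemma XActL_sum_left (φ : V →ₗ[𝕂] V) {ι : Type*} (s : Finset ι) (w : ι → (V →ₗ[𝕂] 𝕂))
    (p : Polynomial 𝕂) : XActL φ (∑ i ∈ s, w i) p = ∑ i ∈ s, XActL φ (w i) p := by
  ext x
  simp [XActL_apply, LinearMap.sum_apply]

lemma dep_vectors {n : ℕ} (c : Fin (n+1) → (Fin n → Polynomial 𝕂)) :
    ∃ r : Fin (n+1) → Polynomial 𝕂, (∃ j, r j ≠ 0) ∧ ∀ i, ∑ j, r j * c j i = 0 := by
  have hnLI : ¬ LinearIndependent (Polynomial 𝕂) c := by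
    intro hLI
    have hcard := hLI.fintype_card_le_finrank
    rw [Module.finrank_pi] at hcard
    simp only [Fintype.card_fin] at hcard
    omega
  rw [Fintype.linearIndependent_iff] at hnLI
  push_neg at hnLI
  obtain ⟨r, hr0, j, hj⟩ := hnLI
  refine ⟨r, ⟨j, hj⟩, ?_⟩
  intro i
  have hfi := congrFun hr0 i
  simpa [Finset.sum_apply, Pi.smul_apply, smul_eq_mul] using hfi

lemma rel_of_not_pindep {φ : V →ₗ[𝕂] V} {n : ℕ} (g : Fin n → (V →ₗ[𝕂] 𝕂)) (hg : PIndepF φ g)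
    (x : V →ₗ[𝕂] 𝕂) (hnx : ¬ PIndepF φ (Fin.snoc g x)) :
    ∃ (q : Polynomial 𝕂) (p : Fin n → Polynomial 𝕂), q ≠ 0 ∧
      XActL φ x q = ∑ i, XActL φ (g i) (p i) := by
  rw [PIndepF] at hnx
  push_neg at hnx
  obtain ⟨r, hsum, i₀, hi₀⟩ := hnx
  have hsplit : (∑ i : Fin n, XActL φ (g i) (r i.castSucc)) + XActL φ x (r (Fin.last n)) = 0 := by
    rw [← hsum, Fin.sum_univ_castSucc]
    congr 1
    · refine Finset.sum_congr rfl fun i _ => ?_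
      rw [Fin.snoc_castSucc]
    · rw [Fin.snoc_last]
  by_cases hq : r (Fin.last n) = 0
  · exfalso
    rw [hq, map_zero, add_zero] at hsplit
    have hz : ∀ i : Fin n, r i.castSucc = 0 := fun i => hg (fun i => r i.castSucc) hsplit i
    rcases Fin.eq_castSucc_or_eq_last i₀ with ⟨j, rfl⟩ | rfl
    · exact hi₀ (hz j)
    · exact hi₀ hq
  · refine ⟨r (Fin.last n), fun i => - r i.castSucc, hq, ?_⟩
    have hneg := eq_neg_of_add_eq_zero_right hsplit
    rw [hneg, ← Finset.sum_neg_distrib]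
    exact Finset.sum_congr rfl fun i _ => (map_neg _ _).symm

lemma exchange {φ : V →ₗ[𝕂] V} {n : ℕ} (g : Fin n → (V →ₗ[𝕂] 𝕂)) (hg : PIndepF φ g)
    (h : Fin (n+1) → (V →ₗ[𝕂] 𝕂)) (hh : PIndepF φ h) :
    ∃ j, PIndepF φ (Fin.snoc g (h j)) := by
  by_contra hno
  push_neg at hno
  have hrel0 : ∀ j, ∃ (q : Polynomial 𝕂) (p : Fin n → Polynomial 𝕂), q ≠ 0 ∧
      XActL φ (h j) q = ∑ i, XActL φ (g i) (p i) :=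
    fun j => rel_of_not_pindep g hg (h j) (hno j)
  choose q p hq hrel using hrel0
  obtain ⟨r, ⟨j₀, hj₀⟩, hrc⟩ := dep_vectors (fun j i => p j i)
  have hkey : ∑ j, XActL φ (h j) (q j * r j) = 0 := by
    calc ∑ j, XActL φ (h j) (q j * r j)
        = ∑ j, XActL φ (XActL φ (h j) (q j)) (r j) :=
          Finset.sum_congr rfl fun j _ => XActL_mul φ (h j) (r j) (q j)
      _ = ∑ j, ∑ i, XActL φ (XActL φ (g i) (p j i)) (r j) := by
          refine Finset.sum_congr rfl fun j _ => ?_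
          rw [hrel j, XActL_sum_left]
      _ = ∑ j, ∑ i, XActL φ (g i) (p j i * r j) := by
          refine Finset.sum_congr rfl fun j _ => Finset.sum_congr rfl fun i _ => ?_
          exact (XActL_mul φ (g i) (r j) (p j i)).symm
      _ = ∑ i, XActL φ (g i) (∑ j, p j i * r j) := by
          rw [Finset.sum_comm]
          refine Finset.sum_congr rfl fun i _ => ?_
          rw [map_sum]
      _ = 0 := by
          refine Finset.sum_eq_zero fun i _ => ?_
          have hcomm : ∑ j, p j i * r j = ∑ j, r j * p j i :=
            Finset.sum_congr rfl fun j _ => mul_comm _ _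
          rw [hcomm, hrc i, map_zero]
  have hz := hh (fun j => q j * r j) hkey
  apply hj₀
  rcases mul_eq_zero.mp (hz j₀) with h1 | h1
  · exact absurd h1 (hq j₀)
  · exact h1

end Aux9
section Aux10

variable {𝕂 V : Type*} [Field 𝕂] [AddCommGroup V] [Module 𝕂 V]
  [TopologicalSpace V] [IsTopologicalAddGroup V]

lemma infinite_family (φ : V →ₗ[𝕂] V)
    (hP : ∀ k : ℕ, ∃ v : Fin k → (V →ₗ[𝕂] 𝕂),
      (∀ i, IsOpen ((LinearMap.ker (v i) : Submodule 𝕂 V) : Set V)) ∧ PIndepF φ v) :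
    ∃ gg : ℕ → (V →ₗ[𝕂] 𝕂), (∀ n, IsOpen ((LinearMap.ker (gg n) : Submodule 𝕂 V) : Set V)) ∧
      LinearIndependent 𝕂 (fun q : ℕ × ℕ => (gg q.1) ∘ₗ φ ^ q.2) := by
  classical
  have hstep : ∀ m (g : Fin m → (V →ₗ[𝕂] 𝕂)),
      ((∀ i, IsOpen ((LinearMap.ker (g i) : Submodule 𝕂 V) : Set V)) ∧ PIndepF φ g) →
      ∃ x : (V →ₗ[𝕂] 𝕂),
        (∀ i, IsOpen ((LinearMap.ker ((Fin.snoc g x : Fin (m+1) → _) i) : Submodule 𝕂 V) : Set V))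
          ∧ PIndepF φ (Fin.snoc g x) := by
    intro m g hg
    obtain ⟨h, hopen, hPI⟩ := hP (m+1)
    obtain ⟨j, hj⟩ := exchange g hg.2 h hPI
    refine ⟨h j, ?_, hj⟩
    intro i
    rcases Fin.eq_castSucc_or_eq_last i with ⟨j', rfl⟩ | rfl
    · rw [Fin.snoc_castSucc]
      exact hg.1 j'
    · rw [Fin.snoc_last]
      exact hopen j
  choose extF hext using hstep
  have hgood0 : (∀ i : Fin 0, IsOpen ((LinearMap.ker ((Fin.elim0 : Fin 0 → (V →ₗ[𝕂] 𝕂)) i)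
      : Submodule 𝕂 V) : Set V)) ∧ PIndepF φ (Fin.elim0 : Fin 0 → (V →ₗ[𝕂] 𝕂)) :=
    ⟨fun i => i.elim0, fun r hr i => i.elim0⟩
  let G : (n : ℕ) → {g : Fin n → (V →ₗ[𝕂] 𝕂) //
      (∀ i, IsOpen ((LinearMap.ker (g i) : Submodule 𝕂 V) : Set V)) ∧ PIndepF φ g} :=
    fun n => Nat.rec ⟨Fin.elim0, hgood0⟩
      (fun m ih => ⟨Fin.snoc ih.1 (extF m ih.1 ih.2), hext m ih.1 ih.2⟩) n
  have hGsucc : ∀ n, (G (n+1)).1 = Fin.snoc (G n).1 (extF n (G n).1 (G n).2) := fun n => rfl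
  set gg : ℕ → (V →ₗ[𝕂] 𝕂) := fun n => (G (n+1)).1 (Fin.last n) with hgg
  have hprefix : ∀ n (i : Fin n), (G n).1 i = gg (i : ℕ) := by
    intro n
    induction n with
    | zero => exact fun i => i.elim0
    | succ m ih =>
      intro i
      rcases Fin.eq_castSucc_or_eq_last i with ⟨j, rfl⟩ | rfl
      · rw [hGsucc m, Fin.snoc_castSucc, ih j]
        congr 1
      · rfl
  have hggopen : ∀ n, IsOpen ((LinearMap.ker (gg n) : Submodule 𝕂 V) : Set V) :=
    fun n => (G (n+1)).2.1 (Fin.last n)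
  have hchunk : ∀ M, LinearIndependent 𝕂 (fun q : Fin M × ℕ => ((G M).1 q.1) ∘ₗ φ ^ q.2) :=
    fun M => (pindepF_iff_chunkLI φ (G M).1).mp (G M).2.2
  refine ⟨gg, hggopen, ?_⟩
  rw [linearIndependent_iff']
  intro s c hsum q hq
  set M := (s.sup Prod.fst) + 1 with hMdef
  have hM : ∀ p ∈ s, p.1 < M := fun p hp => Nat.lt_succ_of_le (Finset.le_sup (f := Prod.fst) hp)
  set e : ℕ × ℕ → Fin M × ℕ := fun p => (⟨min p.1 (M-1), by omega⟩, p.2) with he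
  have heinj : ∀ p ∈ s, ∀ r ∈ s, e p = e r → p = r := by
    intro p hp r hr hpr
    have hpr' : ((⟨min p.1 (M-1), by omega⟩ : Fin M), p.2)
        = ((⟨min r.1 (M-1), by omega⟩ : Fin M), r.2) := hpr
    obtain ⟨h1', h2⟩ := Prod.mk.inj hpr'
    have h1 : min p.1 (M-1) = min r.1 (M-1) := congrArg Fin.val h1'
    have hp1 := hM p hp
    have hr1 := hM r hr
    refine Prod.ext ?_ h2
    omega
  have hsum' : ∑ pq ∈ s.image e, c ((pq.1 : ℕ), pq.2) • (((G M).1 pq.1) ∘ₗ φ ^ pq.2) = 0 := by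
    rw [Finset.sum_image heinj]
    rw [← hsum]
    refine Finset.sum_congr rfl fun p hp => ?_
    have hmin : min p.1 (M-1) = p.1 := by
      have := hM p hp
      omega
    have hc : c (((e p).1 : ℕ), (e p).2) = c p := by
      have : (((e p).1 : ℕ), (e p).2) = p := by
        rw [he]
        exact Prod.ext hmin rfl
      rw [this]
    have hfam : ((G M).1 (e p).1) ∘ₗ φ ^ (e p).2 = (gg p.1) ∘ₗ φ ^ p.2 := by
      rw [hprefix M (e p).1]
      have hval : (((e p).1 : Fin M) : ℕ) = p.1 := hmin
      rw [hval]
    rw [hc, hfam]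
  have := linearIndependent_iff'.mp (hchunk M) (s.image e)
    (fun pq => c ((pq.1 : ℕ), pq.2)) hsum' (e q) (Finset.mem_image_of_mem e hq)
  have hminq : min q.1 (M-1) = q.1 := by
    have := hM q hq
    omega
  have hfin : c (min q.1 (M-1), q.2) = 0 := this
  rw [hminq] at hfin
  simpa using hfin

end Aux10
section Aux11

variable {𝕂 V : Type*} [Field 𝕂] [AddCommGroup V] [Module 𝕂 V]
  [TopologicalSpace V] [IsTopologicalAddGroup V]

lemma hstar_le (hV : IsLinearlyCompact 𝕂 V) {φ : V →ₗ[𝕂] V} (hφ : Continuous φ) (K : ℕ)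
    (hnoP : ¬ ∃ v : Fin (K+1) → (V →ₗ[𝕂] 𝕂),
      (∀ i, IsOpen ((LinearMap.ker (v i) : Submodule 𝕂 V) : Set V)) ∧
        LinearIndependent 𝕂 (fun q : Fin (K+1) × ℕ => (v q.1) ∘ₗ φ ^ q.2))
    {U : Submodule 𝕂 V} (hU : IsOpen (U : Set V)) :
    HStar φ U ≤ (K : ℝ≥0∞) + 1 := by
  classical
  haveI := factA hV hU
  set d := Module.finrank 𝕂 (V ⧸ U) with hd
  set B := Module.finBasis 𝕂 (V ⧸ U) with hB
  set f : Fin d → (V →ₗ[𝕂] 𝕂) := fun i => (B.coord i) ∘ₗ U.mkQ with hf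
  have hUle : ∀ i, U ≤ LinearMap.ker (f i) := by
    intro i x hx
    rw [LinearMap.mem_ker, hf]
    simp only [LinearMap.comp_apply, Submodule.mkQ_apply]
    rw [(Submodule.Quotient.mk_eq_zero U).mpr hx]
    simp
  have hUeq : U = ⨅ i, LinearMap.ker (f i) := by
    apply le_antisymm
    · exact le_iInf fun i => hUle i
    · intro x hx
      rw [Submodule.mem_iInf] at hx
      have hrepr : B.repr (U.mkQ x) = 0 := by
        refine Finsupp.ext fun i => ?_
        have := hx i
        rw [LinearMap.mem_ker, hf] at this
        simp only [LinearMap.comp_apply] at this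
        rw [Basis.coord_apply] at this
        simpa using this
      have hz : U.mkQ x = 0 := by
        have := congrArg B.repr.symm hrepr
        simpa using this
      rwa [Submodule.mkQ_apply, Submodule.Quotient.mk_eq_zero] at hz
  have hopf : ∀ i, IsOpen ((LinearMap.ker (f i) : Submodule 𝕂 V) : Set V) :=
    fun i => submodule_isOpen_mono (hUle i) hU
  obtain ⟨C, hC⟩ := growth_main φ hφ f hopf K hnoP
  apply limsup_le_of_eventually
  rw [Filter.eventually_atTop]
  refine ⟨max C 1, fun n hn => ?_⟩
  have hn1 : 1 ≤ n := le_trans (le_max_right C 1) hn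
  have hnC : C ≤ n := le_trans (le_max_left C 1) hn
  have hCn : Cn φ U n = ⨅ p : Fin d × Fin n, LinearMap.ker ((f p.1) ∘ₗ φ ^ ((p.2 : Fin n) : ℕ)) := by
    ext x
    constructor
    · intro hx
      rw [Submodule.mem_iInf]
      intro p
      rw [LinearMap.mem_ker, LinearMap.comp_apply]
      have h1 := (Submodule.mem_iInf _).mp hx ((p.2 : Fin n) : ℕ)
      have h2 := (Submodule.mem_iInf _).mp h1 (Finset.mem_range.mpr p.2.2)
      rw [Submodule.mem_comap, hUeq, Submodule.mem_iInf] at h2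
      have h3 := h2 p.1
      rw [LinearMap.mem_ker] at h3
      exact h3
    · intro hx
      rw [Cn, Submodule.mem_iInf]
      intro m
      rw [Submodule.mem_iInf]
      intro hm
      rw [Submodule.mem_comap, hUeq, Submodule.mem_iInf]
      intro i
      rw [LinearMap.mem_ker]
      have h1 := (Submodule.mem_iInf _).mp hx (i, ⟨m, Finset.mem_range.mp hm⟩)
      rw [LinearMap.mem_ker, LinearMap.comp_apply] at h1
      exact h1
  haveI := Tn_fd φ f n
  haveI : Module.Free 𝕂 ↥(Tn φ f n) := free_sub _
  set bb := Module.finBasis 𝕂 ↥(Tn φ f n) with hbb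
  set h2 : Fin (Module.finrank 𝕂 ↥(Tn φ f n)) → (V →ₗ[𝕂] 𝕂) :=
    fun l => ((bb l : ↥(Tn φ f n)) : (V →ₗ[𝕂] 𝕂)) with hh2
  have hspan : Submodule.span 𝕂 (Set.range (fun p : Fin d × Fin n => (f p.1) ∘ₗ φ ^ ((p.2 : Fin n) : ℕ)))
      = Submodule.span 𝕂 (Set.range h2) := by
    have hr : Set.range h2 = (Tn φ f n).subtype '' (Set.range bb) := by
      rw [← Set.range_comp]
      rfl
    rw [hr, Submodule.span_image, bb.span_eq, Submodule.map_top, Submodule.range_subtype]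
    rfl
  have hCn2 : Cn φ U n = ⨅ l, LinearMap.ker (h2 l) := by
    rw [hCn]
    exact iInf_ker_eq_iInf_ker_of_span_eq _ _ hspan
  haveI hFDCn : FiniteDimensional 𝕂 (V ⧸ Cn φ U n) := by
    rw [hCn2]
    exact fd_quot_iInf_ker _
  have hfrCn : Module.finrank 𝕂 (V ⧸ Cn φ U n) ≤ Module.finrank 𝕂 ↥(Tn φ f n) := by
    rw [hCn2]
    have := finrank_quot_iInf_ker_le h2
    simpa using this
  have hle : Cn φ U n ≤ U := by
    intro x hx
    have h1 := (Submodule.mem_iInf _).mp hx 0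
    have h2' := (Submodule.mem_iInf _).mp h1 (Finset.mem_range.mpr (by omega))
    rw [Submodule.mem_comap, pow_zero] at h2'
    simpa using h2'
  obtain ⟨hFDq, hfrq⟩ := finrank_quot_rel (Cn φ U n) U hle
  haveI := hFDq
  have hnum : (Module.rank 𝕂 (↥U ⧸ Submodule.comap U.subtype (Cn φ U n))).toENat
      = ((Module.finrank 𝕂 (↥U ⧸ Submodule.comap U.subtype (Cn φ U n)) : ℕ∞)) := by
    rw [← Module.finrank_eq_rank, Cardinal.toENat_nat]
  rw [hnum]
  rw [ENNReal.div_le_iff_le_mul (Or.inl (by exact_mod_cast (show n ≠ 0 by omega)))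
    (Or.inl (ENNReal.natCast_ne_top n))]
  have hnat : Module.finrank 𝕂 (↥U ⧸ Submodule.comap U.subtype (Cn φ U n)) ≤ (K + 1) * n := by
    have h1 := hC n
    have hKn : (K + 1) * n = K * n + n := by ring
    omega
  calc (((Module.finrank 𝕂 (↥U ⧸ Submodule.comap U.subtype (Cn φ U n)) : ℕ∞)) : ℝ≥0∞)
      = ((Module.finrank 𝕂 (↥U ⧸ Submodule.comap U.subtype (Cn φ U n)) : ℕ) : ℝ≥0∞) := by
        norm_cast
    _ ≤ (((K + 1) * n : ℕ) : ℝ≥0∞) := by exact_mod_cast hnat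
    _ = ((K : ℝ≥0∞) + 1) * (n : ℝ≥0∞) := by push_cast; ring

end Aux11
/-- **Theorem A, infinite case.** For a topological flow `(V,φ)`,
`ent*(V,φ) = ∞` if and only if there exists an infinite countable coindependent family of
non-stationary cocyclic `φ`-cotrajectories in `V`. -/
theorem stmt_9 {𝕂 V : Type*} [Field 𝕂] [TopologicalSpace 𝕂] [DiscreteTopology 𝕂]
    [AddCommGroup V] [Module 𝕂 V] [TopologicalSpace V] [IsTopologicalAddGroup V]
    [ContinuousSMul 𝕂 V]
    (hV : IsLinearlyCompact 𝕂 V) (φ : V →ₗ[𝕂] V) (hφ : Continuous φ) :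
    entStar 𝕂 V φ = ⊤ ↔
      ∃ U : ℕ → Submodule 𝕂 V,
        (∀ n, IsOpen ((U n : Set V))) ∧
        (∀ n, Module.finrank 𝕂 (V ⧸ U n) = 1) ∧
        (∀ n, ¬ IsOpen ((Cotraj φ (U n) : Set V))) ∧
        Coindependent 𝕂 (fun n => Cotraj φ (U n)) := by
  classical
  constructor
  · intro hent
    by_contra hno
    by_cases hP : ∀ k : ℕ, ∃ v : Fin k → (V →ₗ[𝕂] 𝕂),
        (∀ i, IsOpen ((LinearMap.ker (v i) : Submodule 𝕂 V) : Set V)) ∧ PIndepF φ v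
    · obtain ⟨gg, hggopen, hggLI⟩ := infinite_family φ hP
      apply hno
      refine ⟨fun n => LinearMap.ker (gg n), hggopen, ?_, ?_, ?_⟩
      · intro n
        apply finrank_quot_ker_eq_one
        intro h0
        have hne := hggLI.ne_zero (n, 0)
        apply hne
        show gg n ∘ₗ φ ^ (0:ℕ) = 0
        rw [h0]
        ext x
        simp
      · intro n
        exact not_isOpen_cotraj_of_orbit_li hV
          (hggLI.comp (fun m : ℕ => ((n : ℕ), m))
            (fun a b hab => congrArg Prod.snd hab))
      · exact coindep_of_orbit_li hV hφ hggLI hggopen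
    · push_neg at hP
      obtain ⟨k₀, hk₀⟩ := hP
      rcases k₀ with _ | K
      · exact hk₀ Fin.elim0 (fun i => i.elim0) (fun r hr i => i.elim0)
      · have hnoP : ¬ ∃ v : Fin (K+1) → (V →ₗ[𝕂] 𝕂),
            (∀ i, IsOpen ((LinearMap.ker (v i) : Submodule 𝕂 V) : Set V)) ∧
              LinearIndependent 𝕂 (fun q : Fin (K+1) × ℕ => (v q.1) ∘ₗ φ ^ q.2) := by
          rintro ⟨v, hvo, hvLI⟩
          exact hk₀ v hvo ((pindepF_iff_chunkLI φ v).mpr hvLI)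
        have hle : entStar 𝕂 V φ ≤ (K : ℝ≥0∞) + 1 :=
          iSup₂_le fun U hU => hstar_le hV hφ K hnoP hU
        rw [hent] at hle
        have : ((K : ℝ≥0∞) + 1) ≠ ⊤ := by
          simp [ENNReal.add_eq_top]
        exact this (top_le_iff.mp hle)
  · rintro ⟨U, h1, h2, h3, h4⟩
    exact backward_entStar φ hφ U h1 h2 h3 h4
end

section
/- Let (V,φ) be a topological flow with completely positive topological entropy and V ≠ 0. Then: (a) V has no proper open φ-invariant 𝕂-subspaces; (b) every finite coindependent set of proper closed φ-invariant 𝕂-subspaces of V has cardinality at most ent*(V,φ). -/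
open scoped ENNReal

/-- A topological flow `(V,φ)` has *completely positive topological entropy* if
`ent*(V/Z, φ̄) ≠ 0` for every proper closed `φ`-invariant `𝕂`-subspace `Z` of `V`,
where `φ̄` is induced by `φ`. -/
def CompletelyPositiveEntStar (𝕂 V : Type*) [Field 𝕂] [AddCommGroup V] [Module 𝕂 V]
    [TopologicalSpace V] (φ : V →ₗ[𝕂] V) : Prop :=
  ∀ (Z : Submodule 𝕂 V), IsClosed (Z : Set V) → ∀ hinv : Z ≤ Z.comap φ, Z ≠ ⊤ →
    entStar 𝕂 (V ⧸ Z) (Submodule.mapQ Z Z φ hinv) ≠ 0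

/-!
(a) An open subspace of a linearly compact space has finite codimension, and a flow on a
finite-dimensional space has zero entropy; so a proper open invariant `U` would give
`ent*(V/U, φ̄) = 0`.

(b) For each `N ∈ S` choose an open `U_N ≤ V/N` with `H*(φ̄, U_N) ≠ 0`. Then the chain
`C_n(φ̄, U_N)` can never stabilise, so `dim U_N / C_{n+1}(φ̄, U_N) ≥ n`. Coindependence is a
Chinese remainder theorem: `V → ∏_N V/N` is onto. Hence for the open subspace
`X = ⋂_N π_N⁻¹ U_N` the quotient `X / C_{n+1}(φ, X)` maps onto `∏_N U_N / C_{n+1}(φ̄, U_N)`,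
which has dimension at least `|S| n`, and `H*(φ, X) ≥ |S|`.
-/

open Filter Topology

section Cotrajectory

variable {𝕂 V : Type*} [Field 𝕂] [AddCommGroup V] [Module 𝕂 V] (φ : V →ₗ[𝕂] V)

theorem mem_Cn {U : Submodule 𝕂 V} {n : ℕ} {x : V} : x ∈ Cn φ U n ↔ ∀ k < n, (φ ^ k) x ∈ U := by
  simp [Cn, Submodule.mem_iInf]

theorem Cn_zero (U : Submodule 𝕂 V) : Cn φ U 0 = ⊤ := by
  ext x; simp [mem_Cn]

theorem Cn_succ (U : Submodule 𝕂 V) (n : ℕ) : Cn φ U (n + 1) = U ⊓ (Cn φ U n).comap φ := by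
  ext x
  simp only [mem_Cn, Submodule.mem_inf, Submodule.mem_comap, Nat.forall_lt_succ_left, pow_zero,
    Module.End.one_apply, pow_succ, Module.End.mul_apply]

theorem Cn_succ_le (U : Submodule 𝕂 V) (n : ℕ) : Cn φ U (n + 1) ≤ U := by
  rw [Cn_succ]
  exact inf_le_left

theorem Cn_antitone (U : Submodule 𝕂 V) : Antitone (Cn φ U) := fun _ _ hmn _ hx =>
  (mem_Cn φ).2 fun k hk => (mem_Cn φ).1 hx k (hk.trans_le hmn)

theorem Cn_mono {U U' : Submodule 𝕂 V} (h : U ≤ U') (n : ℕ) : Cn φ U n ≤ Cn φ U' n :=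
  fun _ hx => (mem_Cn φ).2 fun k hk => h ((mem_Cn φ).1 hx k hk)

theorem Cn_add_eq_of_succ_eq {U : Submodule 𝕂 V} {m : ℕ} (h : Cn φ U (m + 1) = Cn φ U m) :
    ∀ j, Cn φ U (m + j) = Cn φ U m
  | 0 => rfl
  | j + 1 => by
    rw [← add_assoc, Cn_succ, Cn_add_eq_of_succ_eq h j, ← Cn_succ, h]

theorem Cn_comap {V' : Type*} [AddCommGroup V'] [Module 𝕂 V'] {π : V →ₗ[𝕂] V'}
    {ψ : V' →ₗ[𝕂] V'} (h : ψ ∘ₗ π = π ∘ₗ φ) (U' : Submodule 𝕂 V') (n : ℕ) :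
    Cn φ (U'.comap π) n = (Cn ψ U' n).comap π := by
  induction n with
  | zero => simp [Cn_zero]
  | succ n ih =>
    rw [Cn_succ, Cn_succ, ih, Submodule.comap_inf, ← Submodule.comap_comp, ← Submodule.comap_comp,
      h]

end Cotrajectory

section Rank

variable {𝕂 M : Type*} [Field 𝕂] [AddCommGroup M] [Module 𝕂 M]

theorem rank_quotient_add_one_le_of_lt {A B : Submodule 𝕂 M} (h : B < A) :
    Module.rank 𝕂 (M ⧸ A) + 1 ≤ Module.rank 𝕂 (M ⧸ B) := by
  rw [← (Submodule.quotientQuotientEquivQuotient B A h.le).rank_eq,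
    ← Submodule.rank_quotient_add_rank (A.map B.mkQ)]
  gcongr
  rw [Cardinal.one_le_iff_ne_zero, ne_eq, Submodule.rank_eq_zero, ← le_bot_iff,
    Submodule.map_le_iff_le_comap, Submodule.comap_bot, Submodule.ker_mkQ]
  exact h.not_ge

end Rank

theorem ENNReal.tendsto_const_div_natCast {c : ℝ≥0∞} (hc : c ≠ ⊤) :
    Tendsto (fun n : ℕ => c / n) atTop (𝓝 0) := by
  simpa [div_eq_mul_inv] using
    ENNReal.Tendsto.const_mul ENNReal.tendsto_inv_nat_nhds_zero (Or.inr hc)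

section Entropy

variable {𝕂 V : Type*} [Field 𝕂] [AddCommGroup V] [Module 𝕂 V] (φ : V →ₗ[𝕂] V)

noncomputable def rankQuotCn (U : Submodule 𝕂 V) (n : ℕ) : Cardinal :=
  Module.rank 𝕂 (U ⧸ (Cn φ U n).comap U.subtype)

theorem HStar_eq_limsup (U : Submodule 𝕂 V) :
    HStar φ U = limsup (fun n : ℕ => ((rankQuotCn φ U n).toENat : ℝ≥0∞) / n) atTop :=
  rfl

theorem HStar_eq_zero_of_eventually_le {U : Submodule 𝕂 V} (d : ℕ)
    (h : ∀ᶠ n in atTop, rankQuotCn φ U n ≤ d) : HStar φ U = 0 := by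
  refine le_antisymm ?_ bot_le
  rw [HStar_eq_limsup]
  calc _ ≤ limsup (fun n : ℕ => (d : ℝ≥0∞) / n) atTop := by
        refine limsup_le_limsup (h.mono fun n hn => ?_)
        refine ENNReal.div_le_div_right ?_ _
        simpa using ENat.toENNReal_le.2 (Cardinal.toENat_le_natCast.2 hn)
    _ = 0 := (ENNReal.tendsto_const_div_natCast (ENNReal.natCast_ne_top d)).limsup_eq

/-- Once `C_n(φ,U)` stops decreasing it is constant, so a non-zero `H*(φ,U)` forces
`C_1 ⊋ C_2 ⊋ ⋯`. -/
theorem le_rankQuotCn_of_HStar_ne_zero {U : Submodule 𝕂 V} (h : HStar φ U ≠ 0) :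
    ∀ n : ℕ, (n : Cardinal) ≤ rankQuotCn φ U (n + 1)
  | 0 => by simp
  | n + 1 => by
    have ih := le_rankQuotCn_of_HStar_ne_zero h n
    have hle : (Cn φ U (n + 2)).comap U.subtype ≤ (Cn φ U (n + 1)).comap U.subtype :=
      Submodule.comap_mono (Cn_antitone φ U (Nat.le_succ _))
    rcases hle.lt_or_eq with hlt | heq
    · push_cast
      calc (n : Cardinal) + 1 ≤ rankQuotCn φ U (n + 1) + 1 := by gcongr
        _ ≤ rankQuotCn φ U (n + 2) := rank_quotient_add_one_le_of_lt hlt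
    have hC : Cn φ U (n + 2) = Cn φ U (n + 1) := by
      simpa [Submodule.map_comap_subtype, inf_eq_right.2 (Cn_succ_le φ U (n + 1)),
        inf_eq_right.2 (Cn_succ_le φ U n)] using congrArg (Submodule.map U.subtype) heq
    have hconst : ∀ j ≥ n + 1, rankQuotCn φ U j = rankQuotCn φ U (n + 1) := fun j hj => by
      obtain ⟨i, rfl⟩ := Nat.exists_eq_add_of_le hj
      rw [rankQuotCn, rankQuotCn, Cn_add_eq_of_succ_eq φ hC i]
    rcases lt_or_ge (rankQuotCn φ U (n + 1)) Cardinal.aleph0 with hfin | hinf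
    · obtain ⟨d, hd⟩ := Cardinal.lt_aleph0.1 hfin
      refine absurd (HStar_eq_zero_of_eventually_le φ d ?_) h
      filter_upwards [eventually_ge_atTop (n + 1)] with j hj
      exact ((hconst j hj).trans hd).le
    · rw [hconst (n + 2) (by omega)]
      exact Cardinal.natCast_lt_aleph0.le.trans hinf

theorem natCast_le_HStar {U : Submodule 𝕂 V} (c : ℕ)
    (h : ∀ n : ℕ, ((c * n : ℕ) : Cardinal) ≤ rankQuotCn φ U (n + 1)) :
    (c : ℝ≥0∞) ≤ HStar φ U := by
  have hc : (c : ℝ≥0∞) ≠ ⊤ := ENNReal.natCast_ne_top c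
  have hlim : Tendsto (fun n : ℕ => (c : ℝ≥0∞) - c / n) atTop (𝓝 c) := by
    simpa using ENNReal.Tendsto.sub tendsto_const_nhds (ENNReal.tendsto_const_div_natCast hc)
      (Or.inl hc)
  rw [HStar_eq_limsup, ← hlim.limsup_eq]
  refine limsup_le_limsup ?_
  filter_upwards [eventually_ge_atTop 1] with j hj
  obtain ⟨m, rfl⟩ := Nat.exists_eq_add_of_le' hj
  have hm : ((m + 1 : ℕ) : ℝ≥0∞) ≠ 0 := by simp
  calc (c : ℝ≥0∞) - c / (m + 1 : ℕ) ≤ (c * m : ℕ) / (m + 1 : ℕ) := by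
        rw [tsub_le_iff_right, ENNReal.div_add_div_same, ← Nat.cast_add, ← Nat.mul_succ,
          Nat.cast_mul, mul_div_assoc, ENNReal.div_self hm (ENNReal.natCast_ne_top _), mul_one]
    _ ≤ _ := by
        refine ENNReal.div_le_div_right ?_ _
        simpa using ENat.toENNReal_le.2 (Cardinal.natCast_le_toENat.2 (h m))

theorem HStar_eq_zero_of_finite [Module.Finite 𝕂 V] (U : Submodule 𝕂 V) : HStar φ U = 0 :=
  HStar_eq_zero_of_eventually_le φ (Module.finrank 𝕂 V) <| .of_forall fun _ =>
    calc _ ≤ Module.rank 𝕂 U := rank_quotient_le _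
      _ ≤ Module.rank 𝕂 V := Submodule.rank_le U
      _ = Module.finrank 𝕂 V := (Module.finrank_eq_rank 𝕂 V).symm

end Entropy

section Product

universe u v w

variable {𝕂 : Type*} {V : Type u} {ι : Type v} [Field 𝕂] [AddCommGroup V] [Module 𝕂 V]
  [Fintype ι] {W : ι → Type w} [∀ i, AddCommGroup (W i)] [∀ i, Module 𝕂 (W i)]

/-- `X / C_n(φ,X)` maps onto `∏ᵢ U i / C_n(ψ i, U i)`, where `X = ⋂ᵢ (π i)⁻¹ (U i)`. -/
theorem card_mul_le_rankQuotCn_iInf_comap (φ : V →ₗ[𝕂] V) {ψ : ∀ i, W i →ₗ[𝕂] W i}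
    {π : ∀ i, V →ₗ[𝕂] W i} (hπ : Function.Surjective (LinearMap.pi π))
    (hψ : ∀ i, ψ i ∘ₗ π i = π i ∘ₗ φ) (U : ∀ i, Submodule 𝕂 (W i)) {m n : ℕ}
    (hU : ∀ i, (m : Cardinal) ≤ rankQuotCn (ψ i) (U i) n) :
    ((Fintype.card ι * m : ℕ) : Cardinal) ≤ rankQuotCn φ (⨅ i, (U i).comap (π i)) n := by
  set X := ⨅ i, (U i).comap (π i)
  let r : ∀ i, X →ₗ[𝕂] U i := fun i =>
    ((π i).comp X.subtype).codRestrict (U i) fun x => iInf_le (fun i => (U i).comap (π i)) i x.2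
  let f : X →ₗ[𝕂] Π i, U i ⧸ (Cn (ψ i) (U i) n).comap (U i).subtype :=
    LinearMap.pi fun i => ((Cn (ψ i) (U i) n).comap (U i).subtype).mkQ.comp (r i)
  have hker : (Cn φ X n).comap X.subtype ≤ LinearMap.ker f := fun x hx => by
    refine LinearMap.mem_ker.2 (funext fun i => (Submodule.Quotient.mk_eq_zero _).2 ?_)
    have := Cn_mono φ (iInf_le (fun i => (U i).comap (π i)) i) n hx
    rwa [Cn_comap φ (hψ i)] at this
  have hf : Function.Surjective f := fun y => by
    choose u hu using fun i => Submodule.Quotient.mk_surjective _ (y i)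
    obtain ⟨v, hv⟩ := hπ fun i => (u i : W i)
    have hvi : ∀ i, π i v = u i := fun i => congrFun hv i
    have hvX : v ∈ X :=
      Submodule.mem_iInf _ |>.2 fun i => Submodule.mem_comap.2 (hvi i ▸ (u i).2)
    refine ⟨⟨v, hvX⟩, funext fun i => ?_⟩
    rw [← hu i]
    exact congrArg Submodule.Quotient.mk (Subtype.ext (hvi i))
  have hrank := ((Cn φ X n).comap X.subtype).liftQ f hker |>.lift_rank_le_of_surjective
    fun y => let ⟨x, hx⟩ := hf y; ⟨Submodule.Quotient.mk x, hx⟩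
  have hsum : ((Fintype.card ι * m : ℕ) : Cardinal) ≤
      Cardinal.sum fun i => rankQuotCn (ψ i) (U i) n :=
    calc ((Fintype.card ι * m : ℕ) : Cardinal) = Cardinal.sum fun _ : ι => (m : Cardinal) := by
          simp
      _ ≤ _ := Cardinal.sum_le_sum _ _ hU
  rw [rank_pi] at hrank
  exact Cardinal.lift_le.{max v w}.1 <| by
    simpa [rankQuotCn] using (Cardinal.lift_le.2 hsum).trans hrank

end Product

theorem Coindependent.surjective_pi_mkQ {𝕂 V ι : Type*} [Field 𝕂] [AddCommGroup V] [Module 𝕂 V]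
    [Fintype ι] {N : ι → Submodule 𝕂 V} (hN : Coindependent 𝕂 N) :
    Function.Surjective (LinearMap.pi fun i => (N i).mkQ) := by
  classical
  intro y
  choose x hx using fun i => Submodule.Quotient.mk_surjective _ (y i)
  have hdec : ∀ i, ∃ c, (∀ j ≠ i, c ∈ N j) ∧ c - x i ∈ N i := fun i => by
    have hxi : x i ∈ N i ⊔ ⨅ j ∈ Finset.univ, ⨅ _ : j ≠ i, N j :=
      hN Finset.univ i (Finset.mem_univ i) ▸ Submodule.mem_top
    obtain ⟨a, ha, c, hc, hac⟩ := Submodule.mem_sup.1 hxi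
    simp only [Submodule.mem_iInf, Finset.mem_univ, true_implies] at hc
    exact ⟨c, hc, by simpa [← hac] using neg_mem ha⟩
  choose c hcN hcx using hdec
  refine ⟨∑ j, c j, funext fun i => ?_⟩
  rw [LinearMap.pi_apply, Submodule.mkQ_apply, ← hx i, Submodule.Quotient.eq,
    ← Finset.sum_erase_add _ _ (Finset.mem_univ i), add_sub_assoc]
  exact add_mem (Submodule.sum_mem _ fun j hj => hcN j i (Finset.ne_of_mem_erase hj).symm) (hcx i)

namespace IsLinearlyCompact

variable {𝕂 V : Type*} [Field 𝕂] [AddCommGroup V] [Module 𝕂 V] [TopologicalSpace V]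

theorem exists_forall_eq_one (hV : IsLinearlyCompact 𝕂 V) {ι : Type} (g : ι → V →ₗ[𝕂] 𝕂)
    (hg : ∀ i, IsClosed (LinearMap.ker (g i) : Set V)) (v : ι → V) (hvv : ∀ i, g i (v i) = 1)
    (hv : Pairwise fun i j => g i (v j) = 0) : ∃ x, ∀ i, g i x = 1 := by
  classical
  have hfip : ∀ F : Finset ι, (⋂ i ∈ F, (v i + ·) '' (LinearMap.ker (g i) : Set V)).Nonempty :=
    fun F => ⟨∑ j ∈ F, v j, Set.mem_iInter₂.2 fun i hi =>
      ⟨∑ j ∈ F.erase i, v j, by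
        simp only [SetLike.mem_coe, LinearMap.mem_ker, map_sum]
        exact Finset.sum_eq_zero fun j hj => hv (Finset.ne_of_mem_erase hj).symm,
       Finset.add_sum_erase F v hi⟩⟩
  obtain ⟨x, hx⟩ := hV.2.2 ι _ v hg hfip
  refine ⟨x, fun i => ?_⟩
  obtain ⟨y, hy, rfl⟩ := Set.mem_iInter.1 hx i
  simp [hvv, LinearMap.mem_ker.1 hy]

theorem finite_quotient [IsTopologicalAddGroup V] (hV : IsLinearlyCompact 𝕂 V)
    {U : Submodule 𝕂 V} (hU : IsOpen (U : Set V)) : Module.Finite 𝕂 (V ⧸ U) := by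
  by_contra hinf
  let b := Module.Basis.ofVectorSpace 𝕂 (V ⧸ U)
  have : Infinite (Module.Basis.ofVectorSpaceIndex 𝕂 (V ⧸ U)) :=
    not_finite_iff_infinite.1 fun _ => hinf (Module.Finite.of_basis b)
  let e := Infinite.natEmbedding (Module.Basis.ofVectorSpaceIndex 𝕂 (V ⧸ U))
  let g : ℕ → V →ₗ[𝕂] 𝕂 := fun i => (b.coord (e i)).comp U.mkQ
  have hg : ∀ i, IsClosed (LinearMap.ker (g i) : Set V) := fun i =>
    (LinearMap.ker (g i)).toAddSubgroup.isClosed_of_isOpen <| Submodule.isOpen_mono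
      (fun u hu => by simp [g, (Submodule.Quotient.mk_eq_zero U).2 hu]) hU
  choose v hv using fun i => Submodule.Quotient.mk_surjective U (b (e i))
  obtain ⟨x, hx⟩ := hV.exists_forall_eq_one g hg v (fun i => by simp [g, hv])
    fun i j hij => by simp [g, hv, e.injective.ne hij.symm]
  refine Set.infinite_range_of_injective e.injective <|
    (b.repr (U.mkQ x)).support.finite_toSet.subset ?_
  rintro _ ⟨i, rfl⟩
  simpa [g] using (hx i).trans_ne one_ne_zero

end IsLinearlyCompact

theorem entStar_eq_zero_of_finite {𝕂 V : Type*} [Field 𝕂] [AddCommGroup V] [Module 𝕂 V]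
    [TopologicalSpace V] [Module.Finite 𝕂 V] (φ : V →ₗ[𝕂] V) : entStar 𝕂 V φ = 0 := by
  simp [entStar, HStar_eq_zero_of_finite]

theorem stmt_13_general {𝕂 V : Type*} [Field 𝕂]
    [AddCommGroup V] [Module 𝕂 V] [TopologicalSpace V] [IsTopologicalAddGroup V]
    (hV : IsLinearlyCompact 𝕂 V) (φ : V →ₗ[𝕂] V)
    (hcp : CompletelyPositiveEntStar 𝕂 V φ) :
    (∀ U : Submodule 𝕂 V, IsOpen (U : Set V) → (∀ x ∈ U, φ x ∈ U) → U = ⊤) ∧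
    ∀ S : Finset (Submodule 𝕂 V),
      (∀ N ∈ S, IsClosed (N : Set V) ∧ (∀ x ∈ N, φ x ∈ N) ∧ N ≠ ⊤) →
      Coindependent 𝕂 (fun N : {x // x ∈ S} => (N : Submodule 𝕂 V)) →
      (S.card : ℝ≥0∞) ≤ entStar 𝕂 V φ := by
  refine ⟨fun U hU hφU => ?_, fun S hS hco => ?_⟩
  · by_contra hne
    have := hV.finite_quotient hU
    exact hcp U (U.toAddSubgroup.isClosed_of_isOpen hU) hφU hne (entStar_eq_zero_of_finite _)
  · have hinv : ∀ N : S, (N : Submodule 𝕂 V) ≤ (N : Submodule 𝕂 V).comap φ :=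
      fun N => (hS N N.2).2.1
    have hU : ∀ N : S, ∃ U : Submodule 𝕂 (V ⧸ (N : Submodule 𝕂 V)),
        IsOpen (U : Set (V ⧸ (N : Submodule 𝕂 V))) ∧
          HStar (Submodule.mapQ _ _ φ (hinv N)) U ≠ 0 := fun N => by
      simpa [entStar] using hcp N (hS N N.2).1 (hinv N) (hS N N.2).2.2
    choose U hUo hUH using hU
    set X := ⨅ N : S, (U N).comap (N : Submodule 𝕂 V).mkQ
    have hXo : IsOpen (X : Set V) := by
      simpa [X] using
        isOpen_iInter_of_finite fun N => (hUo N).preimage (Submodule.continuous_mkQ _)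
    have hX : ∀ n, ((S.card * n : ℕ) : Cardinal) ≤ rankQuotCn φ X (n + 1) := fun n => by
      simpa using card_mul_le_rankQuotCn_iInf_comap φ hco.surjective_pi_mkQ
        (fun N => Submodule.mapQ_mkQ _ _ _) U fun N => le_rankQuotCn_of_HStar_ne_zero _ (hUH N) n
    calc (S.card : ℝ≥0∞) ≤ HStar φ X := natCast_le_HStar φ _ hX
      _ ≤ entStar 𝕂 V φ :=
        le_iSup₂ (f := fun (W : Submodule 𝕂 V) (_ : IsOpen (W : Set V)) => HStar φ W) X hXo

/-- Let `(V,φ)` be a topological flow with completely positive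
topological entropy and `V ≠ 0`.  Then (a) `V` has no proper open `φ`-invariant
`𝕂`-subspaces; (b) every finite coindependent set of proper closed `φ`-invariant
`𝕂`-subspaces of `V` has cardinality at most `ent*(V,φ)`. -/
theorem stmt_13 {𝕂 V : Type*} [Field 𝕂] [TopologicalSpace 𝕂] [DiscreteTopology 𝕂]
    [AddCommGroup V] [Module 𝕂 V] [TopologicalSpace V] [IsTopologicalAddGroup V]
    [ContinuousSMul 𝕂 V] [Nontrivial V]
    (hV : IsLinearlyCompact 𝕂 V) (φ : V →ₗ[𝕂] V) (hφ : Continuous φ)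
    (hcp : CompletelyPositiveEntStar 𝕂 V φ) :
    (∀ U : Submodule 𝕂 V, IsOpen (U : Set V) → (∀ x ∈ U, φ x ∈ U) → U = ⊤) ∧
    ∀ S : Finset (Submodule 𝕂 V),
      (∀ N ∈ S, IsClosed (N : Set V) ∧ (∀ x ∈ N, φ x ∈ N) ∧ N ≠ ⊤) →
      Coindependent 𝕂 (fun N : {x // x ∈ S} => (N : Submodule 𝕂 V)) →
      (S.card : ℝ≥0∞) ≤ entStar 𝕂 V φ :=
  stmt_13_general hV φ hcp
end

section
/- Let V = ∏_{n∈ℕ} 𝕂 with the product topology (𝕂 discrete), a linearly compact 𝕂-space, and let β : V → V be the left Bernoulli shift β((x_n)_{n∈ℕ}) = (x_{n+1})_{n∈ℕ}. Then (V,β) has completely positive topological entropy: ent*(V/Z, β̄) > 0 for every proper closed β-invariant 𝕂-subspace Z of V, where β̄ is induced by β. Consequently, every proper closed β-invariant 𝕂-subspace Z of V satisfies ent*(Z, β|_Z) = 0. -/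
open scoped ENNReal

/-- The left (one-dimensional) Bernoulli shift on `∏_{n ∈ ℕ} 𝕂`. -/
def shiftL (𝕂 : Type*) [Field 𝕂] : (ℕ → 𝕂) →ₗ[𝕂] (ℕ → 𝕂) where
  toFun x := fun n => x (n + 1)
  map_add' _ _ := rfl
  map_smul' _ _ := rfl

/-!
A proper closed subspace `Z` of `𝕂^ℕ` misses a cylinder around some point, so it is annihilated
by a nonzero functional that only sees finitely many coordinates: `∑_{i ≤ d} a i * x i = 0` on `Z`
with `a d ≠ 0`. If `Z` is shift-invariant, every `x ∈ Z` satisfies the whole linear recurrence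
`∑_{i ≤ d} a i * x (i + k) = 0`, so `dim Z ≤ d` and `Z` carries no entropy. On `𝕂^ℕ ⧸ Z` the induced
functional `f` has open kernel `U`, and since the recurrence operator is onto (solve for the top
term), the functionals `f ∘ β̄ᵏ` are independent: `dim U / C_{n+1}(β̄, U) ≥ n`, so
`H*(β̄, U) ≥ 1/2`.
-/

open Filter

section Flow

variable {𝕂 W : Type*} [Field 𝕂] [AddCommGroup W] [Module 𝕂 W]

def orbitMap (φ : W →ₗ[𝕂] W) (f : W →ₗ[𝕂] 𝕂) : W →ₗ[𝕂] ℕ → 𝕂 :=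
  LinearMap.pi fun k => f ∘ₗ φ ^ k

@[simp]
theorem orbitMap_apply (φ : W →ₗ[𝕂] W) (f : W →ₗ[𝕂] 𝕂) (w : W) (k : ℕ) :
    orbitMap φ f w k = f ((φ ^ k) w) := rfl

-- `u ↦ (f (φ^(k+1) u))_{k<n}` kills `C_{n+1}(φ, ker f)` and is onto `𝕂ⁿ`.
theorem natCast_le_rank_quotient_Cn_ker (φ : W →ₗ[𝕂] W) (f : W →ₗ[𝕂] 𝕂)
    (hf : Function.Surjective (orbitMap φ f)) (n : ℕ) :
    (n : Cardinal) ≤ Module.rank 𝕂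
      (↥(LinearMap.ker f) ⧸ (Cn φ (LinearMap.ker f) (n + 1)).comap (LinearMap.ker f).subtype) := by
  set U := LinearMap.ker f
  let Θ : U →ₗ[𝕂] Fin n → 𝕂 := LinearMap.pi fun k => f ∘ₗ (φ ^ (k.1 + 1)) ∘ₗ U.subtype
  have hΘ : (Cn φ U (n + 1)).comap U.subtype ≤ LinearMap.ker Θ := by
    intro u hu
    simp only [Cn, Submodule.mem_comap, Submodule.mem_iInf, Finset.mem_range] at hu
    ext k
    exact hu (k.1 + 1) (by omega)
  have hsurj : Function.Surjective (((Cn φ U (n + 1)).comap U.subtype).liftQ Θ hΘ) := by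
    intro y
    obtain ⟨w, hw⟩ := hf fun | 0 => 0 | k + 1 => if h : k < n then y ⟨k, h⟩ else 0
    have hwU : w ∈ U := by simpa [U] using congrFun hw 0
    refine ⟨Submodule.Quotient.mk ⟨w, hwU⟩, funext fun k => ?_⟩
    simpa [Θ] using congrFun hw (k.1 + 1)
  simpa using LinearMap.lift_rank_le_of_surjective _ hsurj

theorem entStar_eq_zero_of_rank_le [TopologicalSpace W] (φ : W →ₗ[𝕂] W) {D : ℕ}
    (h : Module.rank 𝕂 W ≤ D) : entStar 𝕂 W φ = 0 := by
  refine le_antisymm (iSup₂_le fun U _ => ?_) bot_le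
  have hterm (n : ℕ) :
      (((Module.rank 𝕂 (↥U ⧸ (Cn φ U n).comap U.subtype)).toENat : ℕ∞) : ℝ≥0∞) / n ≤
        D / n := by
    gcongr
    exact_mod_cast Cardinal.toENat_le_natCast.mpr
      ((rank_quotient_le _).trans ((Submodule.rank_le U).trans h))
  have hlim : Tendsto (fun n : ℕ => (D : ℝ≥0∞) / n) atTop (nhds 0) := by
    simpa using ENNReal.Tendsto.const_div ENNReal.tendsto_nat_nhds_top
      (.inr (ENNReal.natCast_ne_top D))
  exact (limsup_le_limsup (.of_forall hterm)).trans hlim.limsup_eq.le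

theorem inv_two_le_HStar (φ : W →ₗ[𝕂] W) (U : Submodule 𝕂 W)
    (h : ∀ n : ℕ, (n : Cardinal) ≤ Module.rank 𝕂 (↥U ⧸ (Cn φ U (n + 1)).comap U.subtype)) :
    2⁻¹ ≤ HStar φ U := by
  refine le_limsup_of_frequently_le' (Eventually.frequently ?_)
  filter_upwards [eventually_ge_atTop 2] with n hn
  obtain ⟨m, rfl⟩ : ∃ m, n = m + 1 := ⟨n - 1, by omega⟩
  calc (2⁻¹ : ℝ≥0∞) ≤ m / (m + 1 : ℕ) := by
        rw [ENNReal.le_div_iff_mul_le (by simp) (by simp),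
          ENNReal.inv_mul_le_iff (by simp) (by simp)]
        exact_mod_cast (by omega : m + 1 ≤ 2 * m)
    _ ≤ _ := by
        gcongr
        exact_mod_cast Cardinal.enat_gc.le_u (h m)

theorem entStar_ne_zero_of_surjective_orbitMap [TopologicalSpace W] [TopologicalSpace 𝕂]
    [DiscreteTopology 𝕂] (φ : W →ₗ[𝕂] W) {f : W →ₗ[𝕂] 𝕂} (hf : Continuous f)
    (hsurj : Function.Surjective (orbitMap φ f)) : entStar 𝕂 W φ ≠ 0 := by
  have hU : IsOpen (LinearMap.ker f : Set W) := (isOpen_discrete {0}).preimage hf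
  have hle := (inv_two_le_HStar φ _ (natCast_le_rank_quotient_Cn_ker φ f hsurj)).trans
    (le_iSup₂ (f := fun (U : Submodule 𝕂 W) (_ : IsOpen (U : Set W)) => HStar φ U) _ hU)
  exact (lt_of_lt_of_le (by norm_num) hle).ne'

theorem orbitMap_mapQ_liftQ_comp_mkQ {V : Type*} [AddCommGroup V] [Module 𝕂 V]
    {Z : Submodule 𝕂 V} {φ : V →ₗ[𝕂] V} (hinv : Z ≤ Z.comap φ) {g : V →ₗ[𝕂] 𝕂}
    (hg : Z ≤ LinearMap.ker g) :
    orbitMap (Z.mapQ Z φ hinv) (Z.liftQ g hg) ∘ₗ Z.mkQ = orbitMap φ g := by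
  ext x k
  rw [LinearMap.comp_apply, Submodule.mkQ_apply, orbitMap_apply, orbitMap_apply,
    ← Submodule.mapQ_pow Z hinv k]
  rfl

end Flow

section Shift

variable {𝕂 : Type*} [Field 𝕂]

theorem shiftL_pow_apply (k : ℕ) (x : ℕ → 𝕂) (n : ℕ) : (shiftL 𝕂 ^ k) x n = x (n + k) := by
  induction k generalizing x with
  | zero => rfl
  | succ k ih => rw [pow_succ, Module.End.mul_apply, ih]; rfl

def recurrenceOp (a : ℕ → 𝕂) (d : ℕ) : (ℕ → 𝕂) →ₗ[𝕂] ℕ → 𝕂 where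
  toFun x k := ∑ i ∈ Finset.range (d + 1), a i * x (i + k)
  map_add' x y := by ext; simp [mul_add, Finset.sum_add_distrib]
  map_smul' c x := by ext; simp [Finset.mul_sum, mul_left_comm]

theorem recurrenceOp_apply (a : ℕ → 𝕂) (d : ℕ) (x : ℕ → 𝕂) (k : ℕ) :
    recurrenceOp a d x k = ∑ i ∈ Finset.range (d + 1), a i * x (i + k) := rfl

theorem recurrenceOp_apply_eq_apply_zero_shiftL_pow (a : ℕ → 𝕂) (d : ℕ) (x : ℕ → 𝕂) (k : ℕ) :
    recurrenceOp a d x k = recurrenceOp a d ((shiftL 𝕂 ^ k) x) 0 := by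
  simp [recurrenceOp_apply, shiftL_pow_apply]

-- Solves `recurrenceOp a d x = y` for the top term `x (d + k)`, starting from `x = 0` on `[0, d)`.
noncomputable def recurrenceSol (a : ℕ → 𝕂) (d : ℕ) (y : ℕ → 𝕂) (j : ℕ) : 𝕂 :=
  if _ : d ≤ j then
    (y (j - d) - ∑ i : Fin d, a i * recurrenceSol a d y (i + (j - d))) / a d
  else 0
decreasing_by omega

theorem recurrenceOp_recurrenceSol {a : ℕ → 𝕂} {d : ℕ} (had : a d ≠ 0) (y : ℕ → 𝕂) :
    recurrenceOp a d (recurrenceSol a d y) = y := by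
  ext k
  rw [recurrenceOp_apply, Finset.sum_range_succ, ← Fin.sum_univ_eq_sum_range,
    recurrenceSol, dif_pos (by omega), Nat.add_sub_cancel_left, mul_div_cancel₀ _ had]
  ring

theorem recurrenceOp_surjective {a : ℕ → 𝕂} {d : ℕ} (had : a d ≠ 0) :
    Function.Surjective (recurrenceOp a d) :=
  fun y => ⟨_, recurrenceOp_recurrenceSol had y⟩

theorem rank_ker_recurrenceOp_le {a : ℕ → 𝕂} {d : ℕ} (had : a d ≠ 0) :
    Module.rank 𝕂 (LinearMap.ker (recurrenceOp a d)) ≤ d := by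
  let E : LinearRecurrence 𝕂 := ⟨d, fun i => -a i / a d⟩
  have hker : LinearMap.ker (recurrenceOp a d) ≤ E.solSpace := by
    intro x hx n
    have hn := congrFun (LinearMap.mem_ker.mp hx) n
    rw [recurrenceOp_apply, Finset.sum_range_succ, ← Fin.sum_univ_eq_sum_range] at hn
    simp only [E, Pi.zero_apply] at hn ⊢
    have hterm (i : Fin d) : -a i / a d * x (n + i) = -(a i * x (i + n)) / a d := by
      rw [add_comm n]; ring
    rw [Finset.sum_congr rfl fun i _ => hterm i, ← Finset.sum_div, Finset.sum_neg_distrib,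
      eq_div_iff had, add_comm n]
    linear_combination hn
  exact (Submodule.rank_mono hker).trans_eq E.solSpace_rank

theorem le_ker_recurrenceOp {Z : Submodule 𝕂 (ℕ → 𝕂)} (hinv : Z ≤ Z.comap (shiftL 𝕂))
    {a : ℕ → 𝕂} {d : ℕ} (hrel : ∀ x ∈ Z, recurrenceOp a d x 0 = 0) :
    Z ≤ LinearMap.ker (recurrenceOp a d) := fun x hx =>
  funext fun k => by
    rw [recurrenceOp_apply_eq_apply_zero_shiftL_pow]
    exact hrel _ (Z.le_comap_pow_of_le_comap hinv k hx)

-- A point outside `Z` has a cylinder neighbourhood missing `Z`, so `Z` together with the sequences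
-- vanishing on `[0, N)` is still proper, and a functional killing both sees only `N` coordinates.
theorem exists_sum_range_eq_zero_of_isClosed [TopologicalSpace 𝕂] [DiscreteTopology 𝕂]
    {Z : Submodule 𝕂 (ℕ → 𝕂)} (hZ : IsClosed (Z : Set (ℕ → 𝕂))) (hne : Z ≠ ⊤) :
    ∃ (c : ℕ → 𝕂) (N : ℕ), (∃ i < N, c i ≠ 0) ∧
      ∀ x ∈ Z, ∑ i ∈ Finset.range N, c i * x i = 0 := by
  obtain ⟨v, -, hv⟩ := SetLike.exists_of_lt hne.lt_top
  obtain ⟨-, ⟨y, N, rfl⟩, hvy, hcyl⟩ :=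
    (PiNat.isTopologicalBasis_cylinders _).exists_subset_of_mem_open hv hZ.isOpen_compl
  rw [← PiNat.mem_cylinder_iff_eq.mp hvy] at hcyl
  let K : Submodule 𝕂 (ℕ → 𝕂) :=
    { carrier := PiNat.cylinder 0 N
      add_mem' := fun hx hy i hi => by simp [hx i hi, hy i hi]
      zero_mem' := fun _ _ => rfl
      smul_mem' := fun c x hx i hi => by simp [hx i hi] }
  have hvK : v ∉ Z ⊔ K := by
    intro hmem
    obtain ⟨z, hz, w, hw, rfl⟩ := Submodule.mem_sup.mp hmem
    exact hcyl (fun i hi => by simp [show w i = 0 from hw i hi]) hz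
  obtain ⟨g, hgv, hg⟩ := Submodule.exists_le_ker_of_notMem hvK
  have hgsum (x : ℕ → 𝕂) : g x = ∑ i ∈ Finset.range N, g (Pi.single i 1) * x i := by
    have hxK : x - ∑ i ∈ Finset.range N, x i • Pi.single i 1 ∈ K := fun j hj => by
      simp [Finset.sum_apply, Pi.single_apply, Finset.mem_range.mpr hj]
    have := hg (Submodule.mem_sup_right hxK)
    simp only [LinearMap.mem_ker, map_sub, map_sum, map_smul, sub_eq_zero] at this
    simp [this, mul_comm]
  refine ⟨fun i => g (Pi.single i 1), N, ?_, fun x hx => ?_⟩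
  · by_contra! h
    refine hgv ((hgsum v).trans (Finset.sum_eq_zero fun i hi => ?_))
    simp [h i (Finset.mem_range.mp hi)]
  · rw [← hgsum]
    exact hg (Submodule.mem_sup_left hx)

theorem exists_recurrenceOp_apply_zero_eq_sum_range {c : ℕ → 𝕂} {N : ℕ}
    (hc : ∃ i < N, c i ≠ 0) :
    ∃ d, c d ≠ 0 ∧ ∀ x : ℕ → 𝕂, recurrenceOp c d x 0 = ∑ i ∈ Finset.range N, c i * x i := by
  classical
  obtain ⟨i, hiN, hi⟩ := hc
  set d := Nat.findGreatest (c · ≠ 0) (N - 1)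
  have hdN : d < N := (Nat.findGreatest_le _).trans_lt (by omega)
  have hd : c d ≠ 0 := Nat.findGreatest_spec (P := (c · ≠ 0)) (by omega : i ≤ N - 1) hi
  refine ⟨d, hd, fun x => ?_⟩
  simp only [recurrenceOp_apply, add_zero]
  refine Finset.sum_subset (Finset.range_subset_range.mpr hdN) fun j hjN hjd => ?_
  simp only [Finset.mem_range] at hjN hjd
  have hj : ¬c j ≠ 0 :=
    Nat.findGreatest_is_greatest (P := (c · ≠ 0)) (n := N - 1) (by omega) (by omega)
  simp [not_not.mp hj]

theorem exists_le_ker_recurrenceOp [TopologicalSpace 𝕂] [DiscreteTopology 𝕂]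
    {Z : Submodule 𝕂 (ℕ → 𝕂)} (hZ : IsClosed (Z : Set (ℕ → 𝕂))) (hinv : Z ≤ Z.comap (shiftL 𝕂))
    (hne : Z ≠ ⊤) : ∃ (a : ℕ → 𝕂) (d : ℕ), a d ≠ 0 ∧ Z ≤ LinearMap.ker (recurrenceOp a d) := by
  obtain ⟨c, N, hc, hrel⟩ := exists_sum_range_eq_zero_of_isClosed hZ hne
  obtain ⟨d, hd, hcd⟩ := exists_recurrenceOp_apply_zero_eq_sum_range hc
  exact ⟨c, d, hd, le_ker_recurrenceOp hinv fun x hx => (hcd x).trans (hrel x hx)⟩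

theorem continuous_recurrenceOp [TopologicalSpace 𝕂] [DiscreteTopology 𝕂] (a : ℕ → 𝕂)
    (d : ℕ) : Continuous (recurrenceOp a d) :=
  continuous_pi fun k =>
    (continuous_finsetSum _ fun i _ => continuous_const.mul (continuous_apply (i + k)) :
      Continuous fun x : ℕ → 𝕂 => ∑ i ∈ Finset.range (d + 1), a i * x (i + k))

theorem orbitMap_shiftL_recurrenceOp (a : ℕ → 𝕂) (d : ℕ) :
    orbitMap (shiftL 𝕂) (LinearMap.proj 0 ∘ₗ recurrenceOp a d) = recurrenceOp a d := by
  ext x k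
  exact (recurrenceOp_apply_eq_apply_zero_shiftL_pow a d x k).symm

theorem entStar_mapQ_shiftL_ne_zero [TopologicalSpace 𝕂] [DiscreteTopology 𝕂]
    {Z : Submodule 𝕂 (ℕ → 𝕂)} (hinv : Z ≤ Z.comap (shiftL 𝕂)) {a : ℕ → 𝕂} {d : ℕ}
    (had : a d ≠ 0) (hZ : Z ≤ LinearMap.ker (recurrenceOp a d)) :
    entStar 𝕂 ((ℕ → 𝕂) ⧸ Z) (Z.mapQ Z (shiftL 𝕂) hinv) ≠ 0 := by
  have hg : Z ≤ LinearMap.ker (LinearMap.proj 0 ∘ₗ recurrenceOp a d) :=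
    hZ.trans (LinearMap.ker_le_ker_comp _ _)
  refine entStar_ne_zero_of_surjective_orbitMap _ (f := Z.liftQ _ hg) ?_ ?_
  · exact Z.isQuotientMap_mkQ.continuous_iff.mpr
      ((continuous_apply 0).comp (continuous_recurrenceOp a d))
  · have hcomp := orbitMap_mapQ_liftQ_comp_mkQ hinv hg
    rw [orbitMap_shiftL_recurrenceOp] at hcomp
    exact Function.Surjective.of_comp (hcomp ▸ recurrenceOp_surjective had)

end Shift

/-- Let `V = ∏_{n ∈ ℕ} 𝕂` with the product topology (`𝕂` discrete) and
`β` the left Bernoulli shift.  Then `(V,β)` has completely positive topological entropy,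
and consequently every proper closed `β`-invariant `𝕂`-subspace `Z` of `V` satisfies
`ent*(Z, β|_Z) = 0`. -/
theorem stmt_16 {𝕂 : Type*} [Field 𝕂] [TopologicalSpace 𝕂] [DiscreteTopology 𝕂] :
    CompletelyPositiveEntStar 𝕂 (ℕ → 𝕂) (shiftL 𝕂) ∧
    ∀ (Z : Submodule 𝕂 (ℕ → 𝕂)), IsClosed (Z : Set (ℕ → 𝕂)) →
      ∀ hZinv : ∀ x ∈ Z, shiftL 𝕂 x ∈ Z, Z ≠ ⊤ →
      entStar 𝕂 ↥Z ((shiftL 𝕂).restrict hZinv) = 0 := by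
  refine ⟨fun Z hZ hinv hne => ?_, fun Z hZ hinv hne => ?_⟩
  · obtain ⟨a, d, had, hker⟩ := exists_le_ker_recurrenceOp hZ hinv hne
    exact entStar_mapQ_shiftL_ne_zero hinv had hker
  · obtain ⟨a, d, had, hker⟩ := exists_le_ker_recurrenceOp hZ hinv hne
    exact entStar_eq_zero_of_rank_le _
      ((Submodule.rank_mono hker).trans (rank_ker_recurrenceOp_le had))
end
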